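/- arXiv:1002.1889 — 8 statements merged into one kernel-verified Lean document; each statement's English description precedes it below -/
import Mathlib

section
/- Let (Ω, 𝓕, P) be a probability space, (f_n)_{n∈ℕ} a sequence of nonnegative a.e.-finite measurable functions, and f a nonnegative a.e.-finite measurable function such that (f_n) converges to f in probability. Let (h_n) be a sequence of forward convex combinations of (f_n) that converges P-a.e. to a measurable function g : Ω → [0,∞]. Then f ≤ g holds P-a.e. -/
/-!
Truncate at a finite level `M`: the functional `u ↦ ∫⁻_A min (u⁺, M)` is concave on a.e.
nonnegative functions, so its value at a forward convex combination `h n` is at least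
`⨅_{k ≥ n}` of its values at the `f k`. Convergence in measure makes these values at `f k`
converge to the value at `f` (dominated convergence along a.e. convergent subsequences),
while the values at `h n` converge to `∫⁻_A min (g, M)`. Hence
`∫⁻_A min (f, M) ≤ ∫⁻_A min (g, M)` for every measurable `A`, so `min (f, M) ≤ min (g, M)`
a.e. for every `M`, and letting `M → ∞` gives `f ≤ g` a.e.
-/

open MeasureTheory Filter Set

/-- `h` is a sequence of forward convex combinations of `f`: for every `n`,
`h n` lies in the convex hull of `{f k : k ≥ n}`. -/
def FwdConvexCombos {Ω : Type*} (f h : ℕ → Ω → ℝ) : Prop :=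
  ∀ n, h n ∈ convexHull ℝ {g : Ω → ℝ | ∃ k, n ≤ k ∧ g = f k}

open scoped ENNReal Topology

namespace ENNReal

theorem le_of_forall_min_natCast_le {a b : ℝ≥0∞} (h : ∀ n : ℕ, min a n ≤ min b n) : a ≤ b := by
  by_contra! hba
  obtain ⟨n, hn⟩ := ENNReal.exists_nat_gt hba.ne_top
  have := h n
  rw [min_eq_left hn.le] at this
  exact (lt_min hba hn).not_ge this

theorem add_mul_min_le_min_add_mul {a b : ℝ≥0∞} (hab : a + b = 1) (x y M : ℝ≥0∞) :
    a * min x M + b * min y M ≤ min (a * x + b * y) M := by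
  refine le_min (by gcongr <;> exact min_le_left _ _) ?_
  calc a * min x M + b * min y M ≤ a * M + b * M := by gcongr <;> exact min_le_right _ _
    _ = M := by rw [← add_mul, hab, one_mul]

end ENNReal

theorem le_of_tendsto_of_tendsto_of_iInf_le {α : Type*} [CompleteLinearOrder α]
    [TopologicalSpace α] [OrderTopology α] {u v : ℕ → α} {a b : α}
    (hu : Tendsto u atTop (𝓝 a)) (hv : Tendsto v atTop (𝓝 b)) (huv : ∀ n, ⨅ k ≥ n, u k ≤ v n) :
    a ≤ b := by
  rw [← hu.liminf_eq, liminf_eq_iSup_iInf_of_nat]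
  refine iSup_le fun m => ge_of_tendsto hv ?_
  filter_upwards [eventually_ge_atTop m] with n hmn
  exact (biInf_mono fun k hnk => hmn.trans hnk).trans (huv n)

namespace MeasureTheory

variable {Ω : Type*} {mΩ : MeasurableSpace Ω} {μ : Measure Ω}

theorem TendstoInMeasure.restrict {E : Type*} [EDist E] {f : ℕ → Ω → E} {g : Ω → E}
    (hf : TendstoInMeasure μ f atTop g) (A : Set Ω) :
    TendstoInMeasure (μ.restrict A) f atTop g := fun ε hε =>
  tendsto_of_tendsto_of_tendsto_of_le_of_le tendsto_const_nhds (hf ε hε) (fun _ => zero_le)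
    fun _ => Measure.le_iff'.1 Measure.restrict_le_self _

theorem tendsto_lintegral_min_of_ae_tendsto [IsFiniteMeasure μ] {u : ℕ → Ω → ℝ≥0∞}
    {v : Ω → ℝ≥0∞} {M : ℝ≥0∞} (hu : ∀ n, AEMeasurable (u n) μ) (hM : M ≠ ∞)
    (huv : ∀ᵐ ω ∂μ, Tendsto (u · ω) atTop (𝓝 (v ω))) :
    Tendsto (fun n => ∫⁻ ω, min (u n ω) M ∂μ) atTop (𝓝 (∫⁻ ω, min (v ω) M ∂μ)) :=
  tendsto_lintegral_of_dominated_convergence' (fun _ => M)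
    (fun n => (hu n).min aemeasurable_const) (fun n => ae_of_all _ fun _ => min_le_right _ _)
    (by simpa using ENNReal.mul_ne_top hM (measure_ne_top μ univ))
    (huv.mono fun _ hω => hω.min tendsto_const_nhds)

theorem TendstoInMeasure.tendsto_lintegral_min_ofReal [IsFiniteMeasure μ] {f : ℕ → Ω → ℝ}
    {g : Ω → ℝ} {M : ℝ≥0∞} (hfg : TendstoInMeasure μ f atTop g)
    (hf : ∀ n, AEMeasurable (f n) μ) (hM : M ≠ ∞) :
    Tendsto (fun n => ∫⁻ ω, min (ENNReal.ofReal (f n ω)) M ∂μ) atTop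
      (𝓝 (∫⁻ ω, min (ENNReal.ofReal (g ω)) M ∂μ)) := by
  refine tendsto_of_subseq_tendsto fun ns hns => ?_
  obtain ⟨ms, -, hms⟩ := TendstoInMeasure.exists_seq_tendsto_ae fun ε hε => (hfg ε hε).comp hns
  exact ⟨ms, tendsto_lintegral_min_of_ae_tendsto (fun n => (hf _).ennreal_ofReal) hM
    (hms.mono fun _ hω => (ENNReal.continuous_ofReal.tendsto _).comp hω)⟩

theorem aemeasurable_of_mem_convexHull {s : Set (Ω → ℝ)} (hs : ∀ u ∈ s, AEMeasurable u μ)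
    {u : Ω → ℝ} (hu : u ∈ convexHull ℝ s) : AEMeasurable u μ := by
  have hconvex : Convex ℝ {u : Ω → ℝ | AEMeasurable u μ} := fun v hv w hw a b _ _ _ =>
    (AEMeasurable.const_smul hv a).add (AEMeasurable.const_smul hw b)
  exact convexHull_min hs hconvex hu

theorem le_lintegral_min_ofReal_of_mem_convexHull {s : Set (Ω → ℝ)}
    (hs : ∀ u ∈ s, AEMeasurable u μ ∧ 0 ≤ᵐ[μ] u) {M c : ℝ≥0∞}
    (hc : ∀ u ∈ s, c ≤ ∫⁻ ω, min (ENNReal.ofReal (u ω)) M ∂μ)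
    {u : Ω → ℝ} (hu : u ∈ convexHull ℝ s) : c ≤ ∫⁻ ω, min (ENNReal.ofReal (u ω)) M ∂μ := by
  set Φ : (Ω → ℝ) → ℝ≥0∞ := fun u => ∫⁻ ω, min (ENNReal.ofReal (u ω)) M ∂μ
  set S := {u : Ω → ℝ | AEMeasurable u μ ∧ 0 ≤ᵐ[μ] u ∧ c ≤ Φ u}
  suffices hS : Convex ℝ S from
    (convexHull_min (t := S) (fun u hu => ⟨(hs u hu).1, (hs u hu).2, hc u hu⟩) hS hu).2.2
  rintro v ⟨hvm, hv0, hcv⟩ w ⟨hwm, hw0, hcw⟩ a b ha hb hab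
  refine ⟨(hvm.const_smul a).add (hwm.const_smul b), ?_, ?_⟩
  · filter_upwards [hv0, hw0] with ω hv hw
    simp only [Pi.zero_apply, Pi.add_apply, Pi.smul_apply, smul_eq_mul] at hv hw ⊢
    positivity
  have hab' : ENNReal.ofReal a + ENNReal.ofReal b = 1 := by
    rw [← ENNReal.ofReal_add ha hb, hab, ENNReal.ofReal_one]
  have hpoint : ∀ᵐ ω ∂μ,
      ENNReal.ofReal a * min (ENNReal.ofReal (v ω)) M
        + ENNReal.ofReal b * min (ENNReal.ofReal (w ω)) M
      ≤ min (ENNReal.ofReal ((a • v + b • w) ω)) M := by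
    filter_upwards [hv0, hw0] with ω hv hw
    simp only [Pi.zero_apply] at hv hw
    rw [Pi.add_apply, Pi.smul_apply, Pi.smul_apply, smul_eq_mul, smul_eq_mul,
      ENNReal.ofReal_add (by positivity) (by positivity), ENNReal.ofReal_mul ha,
      ENNReal.ofReal_mul hb]
    exact ENNReal.add_mul_min_le_min_add_mul hab' _ _ _
  have hmin : ∀ u : Ω → ℝ, AEMeasurable u μ →
      AEMeasurable (fun ω => min (ENNReal.ofReal (u ω)) M) μ :=
    fun u hu => hu.ennreal_ofReal.min aemeasurable_const
  calc c = ENNReal.ofReal a * c + ENNReal.ofReal b * c := by rw [← add_mul, hab', one_mul]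
    _ ≤ ENNReal.ofReal a * Φ v + ENNReal.ofReal b * Φ w := by gcongr
    _ = ∫⁻ ω, ENNReal.ofReal a * min (ENNReal.ofReal (v ω)) M
          + ENNReal.ofReal b * min (ENNReal.ofReal (w ω)) M ∂μ := by
      rw [lintegral_add_left' ((hmin v hvm).const_mul _), lintegral_const_mul'' _ (hmin v hvm),
        lintegral_const_mul'' _ (hmin w hwm)]
    _ ≤ Φ (a • v + b • w) := lintegral_mono_ae hpoint

end MeasureTheory

theorem stmt3_general {Ω : Type*} [MeasurableSpace Ω] (P : Measure Ω)
    [IsProbabilityMeasure P]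
    (f : ℕ → Ω → ℝ) (flim : Ω → ℝ)
    (hfmeas : ∀ n, Measurable (f n)) (hfnn : ∀ n, 0 ≤ᵐ[P] f n)
    (hflimmeas : Measurable flim)
    (hconv : TendstoInMeasure P f atTop flim)
    (h : ℕ → Ω → ℝ) (g : Ω → ENNReal)
    (hFCC : FwdConvexCombos f h)
    (hae : ∀ᵐ ω ∂P, Tendsto (fun n => ENNReal.ofReal (h n ω)) atTop (nhds (g ω))) :
    ∀ᵐ ω ∂P, ENNReal.ofReal (flim ω) ≤ g ω := by
  have htrunc : ∀ M : ℕ, ∀ᵐ ω ∂P, min (ENNReal.ofReal (flim ω)) M ≤ min (g ω) M := by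
    intro M
    refine ae_le_of_forall_setLIntegral_le_of_sigmaFinite
      (hflimmeas.ennreal_ofReal.min measurable_const) fun A _ _ => ?_
    have hf_mem : ∀ n, ∀ u ∈ {u | ∃ k, n ≤ k ∧ u = f k},
        AEMeasurable u (P.restrict A) ∧ 0 ≤ᵐ[P.restrict A] u := by
      rintro n _ ⟨k, -, rfl⟩
      exact ⟨(hfmeas k).aemeasurable, ae_restrict_of_ae (hfnn k)⟩
    refine le_of_tendsto_of_tendsto_of_iInf_le
      ((hconv.restrict A).tendsto_lintegral_min_ofReal (fun n => (hfmeas n).aemeasurable)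
        (ENNReal.natCast_ne_top M))
      (tendsto_lintegral_min_of_ae_tendsto
        (fun n => (aemeasurable_of_mem_convexHull (fun u hu => (hf_mem n u hu).1)
          (hFCC n)).ennreal_ofReal)
        (ENNReal.natCast_ne_top M) (ae_restrict_of_ae hae)) fun n => ?_
    refine le_lintegral_min_ofReal_of_mem_convexHull (hf_mem n) ?_ (hFCC n)
    rintro _ ⟨k, hnk, rfl⟩
    exact iInf₂_le k hnk
  filter_upwards [ae_all_iff.2 htrunc] with ω hω
  exact ENNReal.le_of_forall_min_natCast_le hω

theorem stmt3 {Ω : Type*} [MeasurableSpace Ω] (P : Measure Ω)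
    [IsProbabilityMeasure P]
    (f : ℕ → Ω → ℝ) (flim : Ω → ℝ)
    (hfmeas : ∀ n, Measurable (f n)) (hfnn : ∀ n, 0 ≤ᵐ[P] f n)
    (hflimmeas : Measurable flim) (hflimnn : 0 ≤ᵐ[P] flim)
    (hconv : TendstoInMeasure P f atTop flim)
    (h : ℕ → Ω → ℝ) (g : Ω → ENNReal)
    (hFCC : FwdConvexCombos f h) (hgmeas : Measurable g)
    (hae : ∀ᵐ ω ∂P, Tendsto (fun n => ENNReal.ofReal (h n ω)) atTop (nhds (g ω))) :
    ∀ᵐ ω ∂P, ENNReal.ofReal (flim ω) ≤ g ω :=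
  stmt3_general P f flim hfmeas hfnn hflimmeas hconv h g hFCC hae
end

section
/- Let (Ω, 𝓕, P) be a probability space and (f_n)_{n∈ℕ} a sequence of nonnegative measurable functions with sup_{n∈ℕ} E_P[f_n] < ∞. Then the following are equivalent: (1) there exists a probability measure Q equivalent to P such that sup_{n∈ℕ} E_Q[f_n] < ∞ and lim_{n→∞} E_Q[f_n] = 0; (2) for every ε > 0 there exists a measurable set A_ε ∈ 𝓕 with P(Ω \ A_ε) ≤ ε and lim_{n→∞} E_P[f_n · 1_{A_ε}] = 0. -/
/-!
(1) ⇒ (2): write `Q = g • P`; since `P ≪ Q`, the density `g` is positive `P`-a.e., so for small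
`δ > 0` the set `A = {g ≥ δ}` has `P Aᶜ ≤ ε`, and on `A` we have `P ≤ δ⁻¹ • Q`.

(2) ⇒ (1): take sets `A_k` with `P (A_k)ᶜ → 0`, so that almost every point lies in some `A_k`,
and let `Q` be the normalisation of `∑ₖ 2⁻ᵏ • P|_{A_k}`. Then `P ≪ Q ≪ P`, and
`E_Q[f_n] ∝ ∑ₖ 2⁻ᵏ E_P[f_n 1_{A_k}]` tends to `0` by dominated convergence for series,
each term being bounded by `2⁻ᵏ sup_n E_P[f_n]`.
-/

open MeasureTheory Filter Set Topology
open scoped ENNReal NNReal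

theorem ENNReal.tendsto_tsum_of_dominated_convergence {s : ℕ → ℕ → ℝ≥0∞}
    {g b : ℕ → ℝ≥0∞} (hb : ∑' k, b k ≠ ∞) (hsb : ∀ n k, s n k ≤ b k)
    (hs : ∀ k, Tendsto (s · k) atTop (𝓝 (g k))) :
    Tendsto (fun n => ∑' k, s n k) atTop (𝓝 (∑' k, g k)) := by
  simp_rw [← lintegral_count]
  exact tendsto_lintegral_of_dominated_convergence b (fun _ => measurable_of_countable _)
    (fun n => ae_of_all _ (hsb n)) (by rwa [lintegral_count]) (ae_of_all _ hs)

namespace MeasureTheory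

variable {Ω : Type*} [MeasurableSpace Ω]

theorem exists_pos_measure_setOf_lt_lt_of_ae_pos {μ : Measure Ω} [IsFiniteMeasure μ]
    {g : Ω → ℝ≥0∞} (hg : Measurable g) (hpos : ∀ᵐ ω ∂μ, 0 < g ω) {ε : ℝ≥0∞} (hε : 0 < ε) :
    ∃ δ : ℝ≥0, 0 < δ ∧ μ {ω | g ω < δ} < ε := by
  have hlim := tendsto_measure_biInter_gt (μ := μ) (s := fun δ : ℝ≥0 => {ω | g ω < δ}) (a := 0)
    (fun _ _ => (hg measurableSet_Iio).nullMeasurableSet)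
    (fun _ _ _ hij _ hω => hω.out.trans_le (ENNReal.coe_le_coe.mpr hij))
    ⟨1, one_pos, measure_ne_top _ _⟩
  have hnull : μ (⋂ δ : ℝ≥0, ⋂ _ : δ > 0, {ω | g ω < δ}) = 0 := by
    refine measure_mono_null (fun ω hω => ?_) (ae_iff.mp hpos)
    intro h
    obtain ⟨δ, hδ, hδg⟩ := ENNReal.lt_iff_exists_nnreal_btwn.mp h
    exact (mem_iInter₂.mp hω δ (by exact_mod_cast hδ)).out.not_gt hδg
  rw [hnull] at hlim
  exact ((hlim.eventually (gt_mem_nhds hε)).and self_mem_nhdsWithin).exists.imp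
    fun _ h => ⟨h.2, h.1⟩

theorem smul_restrict_setOf_le_rnDeriv_le (μ ν : Measure Ω) [μ.HaveLebesgueDecomposition ν]
    [SFinite ν] (hμν : μ ≪ ν) (δ : ℝ≥0∞) :
    δ • ν.restrict {ω | δ ≤ μ.rnDeriv ν ω} ≤ μ := by
  refine Measure.le_iff.mpr fun s hs => ?_
  rw [Measure.smul_apply, Measure.restrict_apply hs, smul_eq_mul, ← setLIntegral_const]
  calc ∫⁻ _ in s ∩ {ω | δ ≤ μ.rnDeriv ν ω}, δ ∂ν
      ≤ ∫⁻ ω in s ∩ {ω | δ ≤ μ.rnDeriv ν ω}, μ.rnDeriv ν ω ∂ν :=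
        setLIntegral_mono (Measure.measurable_rnDeriv μ ν) fun _ h => h.2
    _ ≤ ∫⁻ ω in s, μ.rnDeriv ν ω ∂ν := lintegral_mono_set inter_subset_left
    _ = μ s := Measure.setLIntegral_rnDeriv hμν s

theorem exists_set_tendsto_setLIntegral_zero_of_tendsto_lintegral_zero {P Q : Measure Ω}
    [IsFiniteMeasure P] [Q.HaveLebesgueDecomposition P] (hPQ : P ≪ Q) (hQP : Q ≪ P)
    {F : ℕ → Ω → ℝ≥0∞} (hF : Tendsto (fun n => ∫⁻ ω, F n ω ∂Q) atTop (𝓝 0))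
    {ε : ℝ≥0∞} (hε : 0 < ε) :
    ∃ A, MeasurableSet A ∧ P Aᶜ < ε ∧
      Tendsto (fun n => ∫⁻ ω in A, F n ω ∂P) atTop (𝓝 0) := by
  obtain ⟨δ, hδ, hsmall⟩ := exists_pos_measure_setOf_lt_lt_of_ae_pos
    (Measure.measurable_rnDeriv Q P) (hPQ.ae_le (Measure.rnDeriv_pos hQP)) hε
  refine ⟨{ω | δ ≤ Q.rnDeriv P ω}, Measure.measurable_rnDeriv Q P measurableSet_Ici, ?_, ?_⟩
  · simpa only [compl_ofPred, not_le] using hsmall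
  · have hδ0 : (δ : ℝ≥0∞) ≠ 0 := by exact_mod_cast hδ.ne'
    have hbound n : ∫⁻ ω in {ω | δ ≤ Q.rnDeriv P ω}, F n ω ∂P ≤
        (δ : ℝ≥0∞)⁻¹ * ∫⁻ ω, F n ω ∂Q := by
      rw [← ENNReal.mul_le_iff_le_inv hδ0 ENNReal.coe_ne_top]
      calc (δ : ℝ≥0∞) * ∫⁻ ω in {ω | δ ≤ Q.rnDeriv P ω}, F n ω ∂P
          = ∫⁻ ω, F n ω ∂((δ : ℝ≥0∞) • P.restrict {ω | δ ≤ Q.rnDeriv P ω}) := by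
            rw [lintegral_smul_measure, smul_eq_mul]
        _ ≤ ∫⁻ ω, F n ω ∂Q := lintegral_mono' (smul_restrict_setOf_le_rnDeriv_le Q P hQP δ) le_rfl
    have hlim := ENNReal.Tendsto.const_mul hF (Or.inr (ENNReal.inv_ne_top.mpr hδ0))
    rw [mul_zero] at hlim
    exact tendsto_of_tendsto_of_tendsto_of_le_of_le tendsto_const_nhds hlim
      (fun _ => zero_le) hbound

theorem ae_exists_mem_of_measure_compl_le {μ : Measure Ω} {A : ℕ → Set Ω} {ε : ℕ → ℝ≥0∞}
    (hε : Tendsto ε atTop (𝓝 0)) (hA : ∀ k, μ (A k)ᶜ ≤ ε k) : ∀ᵐ ω ∂μ, ∃ k, ω ∈ A k := by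
  rw [ae_iff]
  simp only [not_exists, ← mem_compl_iff, ofPred_forall, ofPred_mem_eq]
  exact le_antisymm (ge_of_tendsto' hε fun k => (measure_mono (iInter_subset _ k)).trans (hA k))
    zero_le

section WeightedRestrict

variable (μ : Measure Ω) (w : ℕ → ℝ≥0∞) (A : ℕ → Set Ω)

theorem sum_smul_restrict_absolutelyContinuous :
    Measure.sum (fun k => w k • μ.restrict (A k)) ≪ μ :=
  Measure.absolutelyContinuous_sum_left fun k =>
    (Measure.absolutelyContinuous_of_le Measure.restrict_le_self).smul_left (w k)

variable {μ w A}

theorem absolutelyContinuous_sum_smul_restrict (hw : ∀ k, w k ≠ 0)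
    (hA : ∀ᵐ ω ∂μ, ∃ k, ω ∈ A k) : μ ≪ Measure.sum (fun k => w k • μ.restrict (A k)) := by
  refine Measure.AbsolutelyContinuous.mk fun s hs hs0 => ?_
  have hpiece k : μ (s ∩ A k) = 0 := by
    rw [Measure.sum_apply _ hs, ENNReal.tsum_eq_zero] at hs0
    simpa [Measure.restrict_apply hs, hw k] using hs0 k
  refine measure_mono_null_ae ?_ (measure_iUnion_null hpiece)
  filter_upwards [hA] with ω ⟨k, hk⟩ hωs
  exact mem_iUnion.mpr ⟨k, hωs, hk⟩

theorem isFiniteMeasure_sum_smul_restrict [IsFiniteMeasure μ] (hw : ∑' k, w k ≠ ∞) :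
    IsFiniteMeasure (Measure.sum fun k => w k • μ.restrict (A k)) := by
  refine ⟨?_⟩
  calc Measure.sum (fun k => w k • μ.restrict (A k)) univ
      ≤ ∑' k, w k * μ univ := by
        rw [Measure.sum_apply _ MeasurableSet.univ]
        exact ENNReal.tsum_le_tsum fun k => by
          simpa using mul_le_mul_right (measure_mono (subset_univ (A k))) (w k)
    _ < ∞ := by
        rw [ENNReal.tsum_mul_right]
        exact ENNReal.mul_lt_top hw.lt_top (measure_lt_top μ univ)

theorem lintegral_sum_smul_restrict (f : Ω → ℝ≥0∞) :
    ∫⁻ ω, f ω ∂(Measure.sum fun k => w k • μ.restrict (A k)) =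
      ∑' k, w k * ∫⁻ ω in A k, f ω ∂μ := by
  simp only [lintegral_sum_measure, lintegral_smul_measure, smul_eq_mul]

end WeightedRestrict

theorem exists_isProbabilityMeasure_smul_of_tendsto_lintegral_zero {P ν : Measure Ω}
    [IsFiniteMeasure ν] [NeZero ν] (hPν : P ≪ ν) (hνP : ν ≪ P) {F : ℕ → Ω → ℝ≥0∞}
    (hbdd : ⨆ n, ∫⁻ ω, F n ω ∂ν < ∞) (hF : Tendsto (fun n => ∫⁻ ω, F n ω ∂ν) atTop (𝓝 0)) :
    ∃ Q : Measure Ω, IsProbabilityMeasure Q ∧ P ≪ Q ∧ Q ≪ P ∧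
      ⨆ n, ∫⁻ ω, F n ω ∂Q < ∞ ∧ Tendsto (fun n => ∫⁻ ω, F n ω ∂Q) atTop (𝓝 0) := by
  have hc : (ν univ)⁻¹ ≠ ∞ := ENNReal.inv_ne_top.mpr (NeZero.ne _)
  refine ⟨(ν univ)⁻¹ • ν, inferInstance,
    hPν.smul_right (ENNReal.inv_ne_zero.mpr (measure_ne_top _ _)), hνP.smul_left _, ?_, ?_⟩
  · simp only [lintegral_smul_measure, smul_eq_mul, ← ENNReal.mul_iSup]
    exact ENNReal.mul_lt_top hc.lt_top hbdd
  · simpa only [lintegral_smul_measure, smul_eq_mul, mul_zero] using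
      ENNReal.Tendsto.const_mul hF (Or.inr hc)

theorem exists_equivalent_tendsto_lintegral_zero_of_ae_exists_mem (P : Measure Ω)
    [IsFiniteMeasure P] [NeZero P] {F : ℕ → Ω → ℝ≥0∞} (hbdd : ⨆ n, ∫⁻ ω, F n ω ∂P < ∞)
    {A : ℕ → Set Ω} (hA : ∀ᵐ ω ∂P, ∃ k, ω ∈ A k)
    (hF : ∀ k, Tendsto (fun n => ∫⁻ ω in A k, F n ω ∂P) atTop (𝓝 0)) :
    ∃ Q : Measure Ω, IsProbabilityMeasure Q ∧ P ≪ Q ∧ Q ≪ P ∧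
      ⨆ n, ∫⁻ ω, F n ω ∂Q < ∞ ∧ Tendsto (fun n => ∫⁻ ω, F n ω ∂Q) atTop (𝓝 0) := by
  set w : ℕ → ℝ≥0∞ := fun k => 2⁻¹ ^ k
  set M := ⨆ n, ∫⁻ ω, F n ω ∂P
  have hw : ∑' k, w k = 2 := by simp [w, ENNReal.tsum_geometric, ENNReal.one_sub_inv_two]
  set ν := Measure.sum fun k => w k • P.restrict (A k)
  have : IsFiniteMeasure ν := isFiniteMeasure_sum_smul_restrict (by simp [hw])
  have hPν : P ≪ ν := absolutelyContinuous_sum_smul_restrict (fun k => by simp [w]) hA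
  have : NeZero ν := ⟨fun h => NeZero.ne P (Measure.measure_univ_eq_zero.mp (hPν (by simp [h])))⟩
  have hdom n k : w k * ∫⁻ ω in A k, F n ω ∂P ≤ w k * M :=
    mul_le_mul_right ((setLIntegral_le_lintegral _ _).trans (le_iSup_of_le n le_rfl)) _
  have hsum : ∑' k, w k * M ≠ ∞ := by rw [ENNReal.tsum_mul_right, hw]; finiteness
  refine exists_isProbabilityMeasure_smul_of_tendsto_lintegral_zero hPν
    (sum_smul_restrict_absolutelyContinuous P w A) ?_ ?_
  · simp only [ν, lintegral_sum_smul_restrict]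
    exact (iSup_le fun n => ENNReal.tsum_le_tsum (hdom n)).trans_lt hsum.lt_top
  · simp only [ν, lintegral_sum_smul_restrict]
    have hlim k : Tendsto (fun n => w k * ∫⁻ ω in A k, F n ω ∂P) atTop (𝓝 0) := by
      simpa using ENNReal.Tendsto.const_mul (hF k) (Or.inr (by simp [w]))
    simpa only [tsum_zero] using ENNReal.tendsto_tsum_of_dominated_convergence hsum hdom hlim

end MeasureTheory

theorem stmt4_general {Ω : Type*} [MeasurableSpace Ω] (P : Measure Ω)
    [IsProbabilityMeasure P]
    (f : ℕ → Ω → ℝ)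
    (hsupP : (⨆ n, ∫⁻ ω, ENNReal.ofReal (f n ω) ∂P) < ⊤) :
    (∃ Q : Measure Ω, IsProbabilityMeasure Q ∧ P ≪ Q ∧ Q ≪ P ∧
        (⨆ n, ∫⁻ ω, ENNReal.ofReal (f n ω) ∂Q) < ⊤ ∧
        Tendsto (fun n => ∫⁻ ω, ENNReal.ofReal (f n ω) ∂Q) atTop (nhds 0)) ↔
    (∀ ε : ℝ, 0 < ε → ∃ A : Set Ω, MeasurableSet A ∧ P Aᶜ ≤ ENNReal.ofReal ε ∧
        Tendsto (fun n => ∫⁻ ω in A, ENNReal.ofReal (f n ω) ∂P) atTop (nhds 0)) := by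
  constructor
  · rintro ⟨Q, hQ, hPQ, hQP, -, hQlim⟩ ε hε
    obtain ⟨A, hAm, hAc, hA⟩ := exists_set_tendsto_setLIntegral_zero_of_tendsto_lintegral_zero
      hPQ hQP hQlim (ENNReal.ofReal_pos.mpr hε)
    exact ⟨A, hAm, hAc.le, hA⟩
  · intro h
    choose A _ hAc hA using fun k : ℕ => h (1 / (k + 1)) Nat.one_div_pos_of_nat
    refine exists_equivalent_tendsto_lintegral_zero_of_ae_exists_mem P hsupP
      (ae_exists_mem_of_measure_compl_le ?_ hAc) hA
    simpa using ENNReal.tendsto_ofReal tendsto_one_div_add_atTop_nhds_zero_nat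

theorem stmt4 {Ω : Type*} [MeasurableSpace Ω] (P : Measure Ω)
    [IsProbabilityMeasure P]
    (f : ℕ → Ω → ℝ)
    (hfmeas : ∀ n, Measurable (f n)) (hfnn : ∀ n, 0 ≤ᵐ[P] f n)
    (hsupP : (⨆ n, ∫⁻ ω, ENNReal.ofReal (f n ω) ∂P) < ⊤) :
    (∃ Q : Measure Ω, IsProbabilityMeasure Q ∧ P ≪ Q ∧ Q ≪ P ∧
        (⨆ n, ∫⁻ ω, ENNReal.ofReal (f n ω) ∂Q) < ⊤ ∧
        Tendsto (fun n => ∫⁻ ω, ENNReal.ofReal (f n ω) ∂Q) atTop (nhds 0)) ↔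
    (∀ ε : ℝ, 0 < ε → ∃ A : Set Ω, MeasurableSet A ∧ P Aᶜ ≤ ENNReal.ofReal ε ∧
        Tendsto (fun n => ∫⁻ ω in A, ENNReal.ofReal (f n ω) ∂P) atTop (nhds 0)) :=
  stmt4_general P f hsupP
end

section
/- Let (Ω, 𝓕, P) be a probability space, (f_n)_{n∈ℕ} a sequence of nonnegative a.e.-finite measurable functions, and f a nonnegative a.e.-finite measurable function. Then the following are equivalent: (i) every sequence of forward convex combinations of (f_n) converges to f in probability; (ii) every sequence of forward convex combinations of the sequence (|f_n − f|)_{n∈ℕ} converges to 0 in probability. -/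
/-!
(ii) ⇒ (i): with weights `wₖ`, `|∑ wₖ fₖ - f| ≤ ∑ wₖ |fₖ - f|`.

(i) ⇒ (ii): since `|fₖ - f| = (fₖ - f) + 2 (f - fₖ)⁺`, a forward convex combination of the
`|fₖ - f|` is, with the same weights, a forward convex combination of the `fₖ`, minus `f`, plus
twice one of the `(f - fₖ)⁺`. The first part tends to `f` by (i). The `(f - fₖ)⁺` tend to `0` in
measure (by (i) for `h = f`) and, as `fₖ ≥ 0`, are dominated by `|f|`. On `{|f| ≤ M}` they are
therefore bounded, so by Vitali they tend to `0` in `L¹`, hence so do their forward convex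
combinations; and `P(|f| > M)` is small for large `M`.

Combinations with the same weights are obtained from the convex hull of a sequence of pairs.
-/

open MeasureTheory Filter Set
open scoped Topology ENNReal

section ConvexHull

variable {E F : Type*} [AddCommGroup E] [Module ℝ E] [AddCommGroup F] [Module ℝ F]

theorem LinearMap.image_convexHull_tail (φ : E →ₗ[ℝ] F) (x : ℕ → E) (n : ℕ) :
    φ '' convexHull ℝ {e | ∃ k, n ≤ k ∧ e = x k} =
      convexHull ℝ {e | ∃ k, n ≤ k ∧ e = φ (x k)} := by
  rw [φ.image_convexHull]
  congr 1
  ext e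
  simp [eq_comm]

theorem mem_convexHull_tail_of_prod {x : ℕ → E} {y : ℕ → F} {n : ℕ} {p : E × F}
    (hp : p ∈ convexHull ℝ {q | ∃ k, n ≤ k ∧ q = (x k, y k)}) :
    p.1 ∈ convexHull ℝ {e | ∃ k, n ≤ k ∧ e = x k} ∧
      p.2 ∈ convexHull ℝ {e | ∃ k, n ≤ k ∧ e = y k} :=
  ⟨(LinearMap.fst ℝ E F).image_convexHull_tail (fun k => (x k, y k)) n ▸ mem_image_of_mem _ hp,
    (LinearMap.snd ℝ E F).image_convexHull_tail (fun k => (x k, y k)) n ▸ mem_image_of_mem _ hp⟩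

theorem exists_mem_convexHull_tail_of_convex {x : ℕ → E} {y : ℕ → F} {R : Set (E × F)}
    (hR : Convex ℝ R) (hxy : ∀ k, (x k, y k) ∈ R) {n : ℕ} {a : E}
    (ha : a ∈ convexHull ℝ {e | ∃ k, n ≤ k ∧ e = x k}) :
    ∃ b ∈ convexHull ℝ {e | ∃ k, n ≤ k ∧ e = y k}, (a, b) ∈ R := by
  obtain ⟨p, hp, rfl⟩ :
      a ∈ LinearMap.fst ℝ E F '' convexHull ℝ {q | ∃ k, n ≤ k ∧ q = (x k, y k)} := by
    rw [LinearMap.image_convexHull_tail]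
    exact ha
  exact ⟨p.2, (mem_convexHull_tail_of_prod hp).2,
    convexHull_min (by rintro _ ⟨k, -, rfl⟩; exact hxy k) hR hp⟩

end ConvexHull

namespace FwdConvexCombos

variable {Ω : Type*} {f h : ℕ → Ω → ℝ} {l : Ω → ℝ}

theorem exists_abs_sub_le (hh : FwdConvexCombos f h) :
    ∃ b, FwdConvexCombos (fun k ω => |f k ω - l ω|) b ∧ ∀ n ω, |h n ω - l ω| ≤ b n ω := by
  have hR : Convex ℝ {q : (Ω → ℝ) × (Ω → ℝ) | ∀ ω, |q.1 ω - l ω| ≤ q.2 ω} := by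
    intro q hq r hr s t hs ht hst ω
    simp only [Prod.fst_add, Prod.snd_add, Prod.smul_fst, Prod.smul_snd, Pi.add_apply,
      Pi.smul_apply, smul_eq_mul]
    calc |s * q.1 ω + t * r.1 ω - l ω|
        = |s * (q.1 ω - l ω) + t * (r.1 ω - l ω)| := by
          congr 1
          linear_combination l ω * hst
      _ ≤ s * |q.1 ω - l ω| + t * |r.1 ω - l ω| := by
          refine (abs_add_le _ _).trans_eq ?_
          rw [abs_mul, abs_mul, abs_of_nonneg hs, abs_of_nonneg ht]
      _ ≤ s * q.2 ω + t * r.2 ω := by gcongr <;> [exact hq ω; exact hr ω]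
  choose b hb hhb using fun n => exists_mem_convexHull_tail_of_convex hR
    (y := fun k ω => |f k ω - l ω|) (fun k ω => le_rfl) (hh n)
  exact ⟨b, hb, hhb⟩

theorem exists_eq_sub_add_two_mul_posPart
    (hh : FwdConvexCombos (fun k ω => |f k ω - l ω|) h) :
    ∃ g s, FwdConvexCombos f g ∧ FwdConvexCombos (fun k ω => max (l ω - f k ω) 0) s ∧
      ∀ n ω, h n ω = g n ω - l ω + 2 * s n ω := by
  set R := {q : (Ω → ℝ) × (Ω → ℝ) × (Ω → ℝ) | ∀ ω, q.1 ω = q.2.1 ω - l ω + 2 * q.2.2 ω}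
  have hR : Convex ℝ R := by
    intro q hq r hr s t _ _ hst ω
    simp only [Prod.fst_add, Prod.snd_add, Prod.smul_fst, Prod.smul_snd, Pi.add_apply,
      Pi.smul_apply, smul_eq_mul, hq ω, hr ω]
    linear_combination -l ω * hst
  have habs : ∀ k, ((fun ω => |f k ω - l ω|), f k, fun ω => max (l ω - f k ω) 0) ∈ R := by
    intro k ω
    rcases le_total (l ω) (f k ω) with hle | hle
    · simp [abs_of_nonneg (sub_nonneg.2 hle), max_eq_right (sub_nonpos.2 hle)]
    · simp only [abs_of_nonpos (sub_nonpos.2 hle), max_eq_left (sub_nonneg.2 hle)]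
      ring
  choose q hq hhq using fun n => exists_mem_convexHull_tail_of_convex hR habs (hh n)
  exact ⟨fun n => (q n).1, fun n => (q n).2, fun n => (mem_convexHull_tail_of_prod (hq n)).1,
    fun n => (mem_convexHull_tail_of_prod (hq n)).2, fun n => hhq n⟩

end FwdConvexCombos

namespace MeasureTheory

variable {α ι : Type*} [MeasurableSpace α] {μ : Measure α}

theorem convex_setOf_eLpNorm_le {E : Type*} [NormedAddCommGroup E] [NormedSpace ℝ E]
    {p : ℝ≥0∞} (hp : 1 ≤ p) (c : ℝ≥0∞) :
    Convex ℝ {φ : α → E | AEStronglyMeasurable φ μ ∧ eLpNorm φ p μ ≤ c} := by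
  rintro φ ⟨hφ, hφc⟩ ψ ⟨hψ, hψc⟩ a b ha hb hab
  refine ⟨(hφ.const_smul a).add (hψ.const_smul b), ?_⟩
  calc eLpNorm (a • φ + b • ψ) p μ ≤ eLpNorm (a • φ) p μ + eLpNorm (b • ψ) p μ :=
        eLpNorm_add_le (hφ.const_smul a) (hψ.const_smul b) hp
    _ = ‖a‖ₑ * eLpNorm φ p μ + ‖b‖ₑ * eLpNorm ψ p μ := by
        rw [eLpNorm_const_smul, eLpNorm_const_smul]
    _ ≤ ‖a‖ₑ * c + ‖b‖ₑ * c := by gcongr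
    _ = c := by
        rw [← add_mul, Real.enorm_of_nonneg ha, Real.enorm_of_nonneg hb,
          ← ENNReal.ofReal_add ha hb, hab, ENNReal.ofReal_one, one_mul]

theorem unifIntegrable_of_norm_le {β : Type*} [NormedAddCommGroup β] {p : ℝ≥0∞}
    {f : ι → α → β} {g : α → ℝ} (hp : 1 ≤ p) (hp' : p ≠ ∞) (hg : MemLp g p μ)
    (hfg : ∀ i, ∀ᵐ x ∂μ, ‖f i x‖ ≤ g x) : UnifIntegrable f p μ := by
  intro ε hε
  obtain ⟨δ, hδ, hgδ⟩ := hg.eLpNorm_indicator_le hp hp' hε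
  refine ⟨δ, hδ, fun i s hs hμs => le_trans (eLpNorm_mono_ae_real ?_) (hgδ s hs hμs)⟩
  filter_upwards [hfg i] with x hx
  by_cases hxs : x ∈ s <;> simp [hxs, hx]

theorem tendsto_eLpNorm_of_tendstoInMeasure_of_norm_le [IsFiniteMeasure μ] {β : Type*}
    [NormedAddCommGroup β] {p : ℝ≥0∞} (hp : 1 ≤ p) (hp' : p ≠ ∞) {f : ℕ → α → β} {C : ℝ}
    (hf : ∀ n, AEStronglyMeasurable (f n) μ) (hC : ∀ n, ∀ᵐ x ∂μ, ‖f n x‖ ≤ C)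
    (hf0 : TendstoInMeasure μ f atTop 0) : Tendsto (fun n => eLpNorm (f n) p μ) atTop (𝓝 0) := by
  have hui : UnifIntegrable f p μ :=
    unifIntegrable_of_norm_le hp hp' (memLp_const C) hC
  simpa using tendsto_Lp_finite_of_tendstoInMeasure hp hp' hf MemLp.zero hui hf0

theorem TendstoInMeasure.add {E : Type*} [SeminormedAddCommGroup E] {l : Filter ι}
    {f g : ι → α → E} {F G : α → E} (hf : TendstoInMeasure μ f l F)
    (hg : TendstoInMeasure μ g l G) : TendstoInMeasure μ (f + g) l (F + G) := by
  rw [tendstoInMeasure_iff_norm] at hf hg ⊢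
  intro ε hε
  refine tendsto_of_tendsto_of_tendsto_of_le_of_le tendsto_const_nhds
    (by simpa using (hf (ε / 2) (half_pos hε)).add (hg (ε / 2) (half_pos hε)))
    (fun _ => zero_le) fun i => (measure_mono fun x hx => ?_).trans (measure_union_le _ _)
  by_contra hx'
  simp only [mem_union, mem_ofPred_eq, not_or, not_le] at hx hx'
  have := norm_add_le (f i x - F x) (g i x - G x)
  rw [Pi.add_apply, Pi.add_apply, Pi.add_apply, add_sub_add_comm] at hx
  linarith

theorem tendstoInMeasure_of_norm_sub_le {E E' : Type*} [SeminormedAddCommGroup E]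
    [SeminormedAddCommGroup E'] {l : Filter ι} {f : ι → α → E} {F : α → E}
    {g : ι → α → E'} {G : α → E'} (hg : TendstoInMeasure μ g l G)
    (hfg : ∀ i, ∀ᵐ x ∂μ, ‖f i x - F x‖ ≤ ‖g i x - G x‖) : TendstoInMeasure μ f l F := by
  rw [tendstoInMeasure_iff_norm] at hg ⊢
  intro ε hε
  refine tendsto_of_tendsto_of_tendsto_of_le_of_le tendsto_const_nhds (hg ε hε)
    (fun _ => zero_le) fun i => measure_mono_ae ?_
  filter_upwards [hfg i] with x hx hxε using hxε.trans hx

theorem TendstoInMeasure.max_sub_zero {l : Filter ι} {f : ι → α → ℝ} {F : α → ℝ}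
    (hf : TendstoInMeasure μ f l F) : TendstoInMeasure μ (fun i x => max (F x - f i x) 0) l 0 := by
  refine tendstoInMeasure_of_norm_sub_le hf fun i => ae_of_all _ fun x => ?_
  rw [Pi.zero_apply, sub_zero, Real.norm_eq_abs, Real.norm_eq_abs,
    abs_of_nonneg (le_max_right _ _), abs_sub_comm]
  exact max_le (le_abs_self _) (abs_nonneg _)

theorem tendsto_measure_lt_atTop [IsFiniteMeasure μ] {G : α → ℝ} (hG : Measurable G) :
    Tendsto (fun M : ℝ => μ {x | M < G x}) atTop (𝓝 0) := by
  have h := tendsto_measure_iInter_atTop (μ := μ)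
    (fun M : ℝ => (measurableSet_lt measurable_const hG).nullMeasurableSet)
    (fun M N hMN x (hx : N < G x) => (lt_of_le_of_lt hMN hx : M < G x))
    ⟨0, measure_ne_top μ _⟩
  rwa [iInter_eq_empty_iff.2 fun x => ⟨G x, lt_irrefl (G x)⟩, measure_empty] at h

theorem tendstoInMeasure_zero_of_forall_indicator {E : Type*} [SeminormedAddCommGroup E]
    {f : ℕ → α → E}
    (hf : ∀ δ : ℝ≥0∞, 0 < δ → ∃ A : Set α, μ Aᶜ ≤ δ ∧
      TendstoInMeasure μ (fun n => A.indicator (f n)) atTop 0) :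
    TendstoInMeasure μ f atTop 0 := by
  rw [tendstoInMeasure_iff_norm]
  intro ε hε
  rw [ENNReal.tendsto_atTop_zero]
  intro δ hδ
  obtain ⟨A, hA, hfA⟩ := hf (δ / 2) (ENNReal.half_pos hδ.ne')
  rw [tendstoInMeasure_iff_norm] at hfA
  obtain ⟨N, hN⟩ := ENNReal.tendsto_atTop_zero.1 (hfA ε hε) (δ / 2) (ENNReal.half_pos hδ.ne')
  refine ⟨N, fun n hn => ?_⟩
  calc μ {x | ε ≤ ‖f n x - (0 : α → E) x‖}
      ≤ μ (Aᶜ ∪ {x | ε ≤ ‖A.indicator (f n) x - (0 : α → E) x‖}) := by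
        refine measure_mono fun x hx => ?_
        by_cases hxA : x ∈ A
        · exact Or.inr (by simpa [hxA] using hx)
        · exact Or.inl hxA
    _ ≤ δ / 2 + δ / 2 := (measure_union_le _ _).trans (add_le_add hA (hN n hn))
    _ = δ := ENNReal.add_halves δ

end MeasureTheory

namespace FwdConvexCombos

variable {Ω : Type*} [MeasurableSpace Ω] {μ : Measure Ω}

theorem tendstoInMeasure_zero_of_tendsto_eLpNorm {p : ℝ≥0∞} (hp : 1 ≤ p) {g h : ℕ → Ω → ℝ}
    (hg : ∀ k, AEStronglyMeasurable (g k) μ)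
    (hg0 : Tendsto (fun k => eLpNorm (g k) p μ) atTop (𝓝 0)) (hh : FwdConvexCombos g h) :
    TendstoInMeasure μ h atTop 0 := by
  have hull_subset : ∀ n c, (∀ k, n ≤ k → eLpNorm (g k) p μ ≤ c) →
      h n ∈ {φ : Ω → ℝ | AEStronglyMeasurable φ μ ∧ eLpNorm φ p μ ≤ c} := by
    intro n c hc
    refine convexHull_min ?_ (convex_setOf_eLpNorm_le (α := Ω) (E := ℝ) (μ := μ) hp c) (hh n)
    rintro _ ⟨k, hk, rfl⟩
    exact ⟨hg k, hc k hk⟩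
  refine tendstoInMeasure_of_tendsto_eLpNorm (by positivity)
    (fun n => (hull_subset n ⊤ fun _ _ => le_top).1) aestronglyMeasurable_const ?_
  simp only [sub_zero]
  rw [ENNReal.tendsto_atTop_zero] at hg0 ⊢
  intro ε hε
  obtain ⟨N, hN⟩ := hg0 ε hε
  exact ⟨N, fun n hn => (hull_subset n ε fun k hk => hN k (hn.trans hk)).2⟩

theorem tendstoInMeasure_zero_of_abs_le [IsFiniteMeasure μ] {g h : ℕ → Ω → ℝ} {G : Ω → ℝ}
    (hg : ∀ k, AEStronglyMeasurable (g k) μ) (hG : Measurable G)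
    (hgG : ∀ k, ∀ᵐ ω ∂μ, |g k ω| ≤ G ω) (hg0 : TendstoInMeasure μ g atTop 0)
    (hh : FwdConvexCombos g h) : TendstoInMeasure μ h atTop 0 := by
  refine tendstoInMeasure_zero_of_forall_indicator fun δ hδ => ?_
  obtain ⟨M, hM, hM0⟩ := (((tendsto_measure_lt_atTop (μ := μ) hG).eventually (ge_mem_nhds hδ)).and
    (eventually_ge_atTop 0)).exists
  set A := {ω | G ω ≤ M}
  have hA : MeasurableSet A := measurableSet_le hG measurable_const
  refine ⟨A, by simpa [A, compl_ofPred] using hM, ?_⟩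
  have hR : Convex ℝ {q : (Ω → ℝ) × (Ω → ℝ) | q.2 = A.indicator q.1} := by
    intro q (hq : q.2 = _) r (hr : r.2 = _) s t _ _ _
    ext ω
    by_cases hω : ω ∈ A <;> simp [hq, hr, hω]
  choose v hv hvh using fun n =>
    exists_mem_convexHull_tail_of_convex hR (y := fun k => A.indicator (g k)) (fun k => rfl) (hh n)
  have hv0 : TendstoInMeasure μ v atTop 0 := by
    refine tendstoInMeasure_zero_of_tendsto_eLpNorm le_rfl (fun k => (hg k).indicator hA)
      (tendsto_eLpNorm_of_tendstoInMeasure_of_norm_le (μ := μ) le_rfl ENNReal.one_ne_top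
        (fun k => (hg k).indicator hA) (C := M) (fun k => ?_) (by simpa using hg0.indicator A)) hv
    filter_upwards [hgG k] with ω hω
    by_cases hωA : ω ∈ A
    · simpa [hωA] using hω.trans hωA
    · simpa [hωA] using hM0
  exact hv0.congr_left fun n => EventuallyEq.of_eq (hvh n)

end FwdConvexCombos

theorem stmt5_general {Ω : Type*} [MeasurableSpace Ω] (P : Measure Ω)
    [IsProbabilityMeasure P]
    (f : ℕ → Ω → ℝ) (flim : Ω → ℝ)
    (hfmeas : ∀ n, Measurable (f n)) (hfnn : ∀ n, 0 ≤ᵐ[P] f n)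
    (hflimmeas : Measurable flim) :
    (∀ h : ℕ → Ω → ℝ, FwdConvexCombos f h → TendstoInMeasure P h atTop flim) ↔
    (∀ h : ℕ → Ω → ℝ, FwdConvexCombos (fun n ω => |f n ω - flim ω|) h →
      TendstoInMeasure P h atTop (fun _ => (0 : ℝ))) := by
  constructor
  · intro hconv h hh
    obtain ⟨g, s, hg, hs, hgs⟩ := hh.exists_eq_sub_add_two_mul_posPart
    have hf : TendstoInMeasure P f atTop flim :=
      hconv f fun n => subset_convexHull ℝ _ ⟨n, le_rfl, rfl⟩
    have hs0 : TendstoInMeasure P s atTop 0 := by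
      refine hs.tendstoInMeasure_zero_of_abs_le (G := fun ω => |flim ω|)
        (fun k => ((hflimmeas.sub (hfmeas k)).max measurable_const).aestronglyMeasurable)
        hflimmeas.abs (fun k => ?_) hf.max_sub_zero
      filter_upwards [hfnn k] with ω (hω : 0 ≤ f k ω)
      show |max (flim ω - f k ω) 0| ≤ |flim ω|
      rw [abs_of_nonneg (le_max_right _ _)]
      exact max_le (by linarith [le_abs_self (flim ω)]) (abs_nonneg _)
    refine tendstoInMeasure_of_norm_sub_le ((hconv g hg).add (hs0.add hs0))
      fun n => ae_of_all _ fun ω => le_of_eq ?_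
    simp only [Pi.add_apply, Pi.zero_apply, hgs n ω]
    ring_nf
  · intro hconv h hh
    obtain ⟨b, hb, hhb⟩ := hh.exists_abs_sub_le (l := flim)
    refine tendstoInMeasure_of_norm_sub_le (hconv b hb) fun n => ae_of_all _ fun ω => ?_
    simpa using (hhb n ω).trans (le_abs_self _)

theorem stmt5 {Ω : Type*} [MeasurableSpace Ω] (P : Measure Ω)
    [IsProbabilityMeasure P]
    (f : ℕ → Ω → ℝ) (flim : Ω → ℝ)
    (hfmeas : ∀ n, Measurable (f n)) (hfnn : ∀ n, 0 ≤ᵐ[P] f n)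
    (hflimmeas : Measurable flim) (hflimnn : 0 ≤ᵐ[P] flim) :
    (∀ h : ℕ → Ω → ℝ, FwdConvexCombos f h → TendstoInMeasure P h atTop flim) ↔
    (∀ h : ℕ → Ω → ℝ, FwdConvexCombos (fun n ω => |f n ω - flim ω|) h →
      TendstoInMeasure P h atTop (fun _ => (0 : ℝ))) :=
  stmt5_general P f flim hfmeas hfnn hflimmeas
end

section
/- Let (Ω, 𝓕, Q) be a probability space, (f_n)_{n∈ℕ} a sequence of nonnegative measurable functions with sup_{n∈ℕ} E_Q[f_n] < ∞, and f a nonnegative measurable function with lim_{n→∞} E_Q[|f_n − f|] = 0. Let C' = { Σ_{n∈ℕ} α_n f_n + (1 − Σ_{n∈ℕ} α_n) f : α_n ≥ 0 for all n and Σ_{n∈ℕ} α_n ≤ 1 }, where the series is understood pointwise a.e. Then every C'-valued sequence (g_k)_{k∈ℕ} admits a subsequence that converges in L¹(Q) to an element of C'; i.e., C' is sequentially compact in L¹(Q). -/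
/-!
Write `g = flim + Σₙ αₙ (fₙ - flim)`: the coefficient sequences `α` range over the countable
simplex `{α ≥ 0, Σ α ≤ 1}`, which is compact in the product topology of `ℝ^ℕ` (Tychonoff), so
a subsequence of the coefficients of `g_k` converges coordinatewise to some `β` in it. With
`εₙ = ‖fₙ - flim‖₁` one gets `‖g_k - glim‖₁ ≤ Σₙ |α_{k,n} - βₙ| εₙ`; the weights
`|α_{k,n} - βₙ|` have total mass at most `2` and tend to `0` in each coordinate, while
`εₙ → 0`, so the right-hand side tends to `0`.
-/

open MeasureTheory Filter Set

/-- `g` is a countable convex combination `Σₙ αₙ fₙ + (1 - Σₙ αₙ) flim`, the series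
being understood as a pointwise a.e. limit. -/
def MemCountableConvex {Ω : Type*} [MeasurableSpace Ω] (μ : Measure Ω)
    (f : ℕ → Ω → ℝ) (flim : Ω → ℝ) (g : Ω → ℝ) : Prop :=
  ∃ α : ℕ → ℝ, (∀ n, 0 ≤ α n) ∧ Summable α ∧ (∑' n, α n) ≤ 1 ∧
    ∀ᵐ ω ∂μ, HasSum (fun n => α n * f n ω) (g ω - (1 - ∑' n, α n) * flim ω)

open Topology Finset
open scoped ENNReal

/-- Partial sums rather than `∑'` make closedness in the product topology evident. -/
def countableSimplex : Set (ℕ → ℝ) :=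
  {α | (∀ n, 0 ≤ α n) ∧ ∀ N, ∑ n ∈ range N, α n ≤ 1}

lemma mem_countableSimplex_iff {α : ℕ → ℝ} :
    α ∈ countableSimplex ↔ (∀ n, 0 ≤ α n) ∧ Summable α ∧ ∑' n, α n ≤ 1 := by
  refine ⟨fun ⟨h0, h1⟩ => ?_, fun ⟨h0, hα, h1⟩ => ⟨h0, fun N => ?_⟩⟩
  · have hα := summable_of_sum_range_le h0 h1
    exact ⟨h0, hα, hα.tsum_le_of_sum_range_le h1⟩
  · exact (hα.sum_le_tsum _ fun n _ => h0 n).trans h1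

lemma isCompact_countableSimplex : IsCompact countableSimplex := by
  have hsub : countableSimplex ⊆ univ.pi fun _ => Icc (0 : ℝ) 1 := fun α ⟨h0, h1⟩ n _ =>
    ⟨h0 n, (single_le_sum (fun i _ => h0 i) (self_mem_range_succ n)).trans (h1 (n + 1))⟩
  have hclosed : IsClosed countableSimplex := by
    have : countableSimplex =
        (⋂ n, {α : ℕ → ℝ | 0 ≤ α n}) ∩ ⋂ N, {α | ∑ n ∈ range N, α n ≤ 1} := by
      ext; simp [countableSimplex]
    rw [this]
    exact (isClosed_iInter fun n => isClosed_le continuous_const (continuous_apply n)).inter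
      (isClosed_iInter fun N =>
        isClosed_le (continuous_finsetSum _ fun n _ => continuous_apply n) continuous_const)
  exact (isCompact_univ_pi fun _ => isCompact_Icc).of_isClosed_subset hclosed hsub

lemma tsum_enorm_le_one_of_mem_countableSimplex {α : ℕ → ℝ} (hα : α ∈ countableSimplex) :
    ∑' n, ‖α n‖ₑ ≤ 1 := by
  obtain ⟨h0, hsum, h1⟩ := mem_countableSimplex_iff.1 hα
  simp_rw [Real.enorm_of_nonneg (h0 _), ← ENNReal.ofReal_tsum_of_nonneg h0 hsum]
  exact ENNReal.ofReal_le_one.2 h1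

lemma tsum_enorm_sub_le_two {α β : ℕ → ℝ} (hα : α ∈ countableSimplex)
    (hβ : β ∈ countableSimplex) : ∑' n, ‖α n - β n‖ₑ ≤ 2 :=
  calc ∑' n, ‖α n - β n‖ₑ ≤ ∑' n, (‖α n‖ₑ + ‖β n‖ₑ) := ENNReal.tsum_le_tsum fun _ => enorm_sub_le
    _ = ∑' n, ‖α n‖ₑ + ∑' n, ‖β n‖ₑ := ENNReal.tsum_add
    _ ≤ 1 + 1 := add_le_add (tsum_enorm_le_one_of_mem_countableSimplex hα)
        (tsum_enorm_le_one_of_mem_countableSimplex hβ)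
    _ = 2 := one_add_one_eq_two

lemma hasSum_mul_iff_hasSum_mul_sub {α : ℕ → ℝ} {s : ℝ} (hα : HasSum α s) (x : ℕ → ℝ)
    (y z : ℝ) :
    HasSum (fun n => α n * x n) (z - (1 - s) * y) ↔
      HasSum (fun n => α n * (x n - y)) (z - y) := by
  have hy : HasSum (fun n => α n * y) (s * y) := hα.mul_right y
  rw [funext fun n => mul_sub (α n) (x n) y, show z - y = z - (1 - s) * y - s * y by ring]
  exact ⟨fun h => h.sub hy, fun h => by simpa using h.add hy⟩

lemma memCountableConvex_iff {Ω : Type*} [MeasurableSpace Ω] {μ : Measure Ω}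
    {f : ℕ → Ω → ℝ} {flim g : Ω → ℝ} :
    MemCountableConvex μ f flim g ↔ ∃ α ∈ countableSimplex,
      ∀ᵐ ω ∂μ, HasSum (fun n => α n * (f n ω - flim ω)) (g ω - flim ω) := by
  simp_rw [MemCountableConvex, mem_countableSimplex_iff]
  constructor
  · rintro ⟨α, h0, hα, h1, h⟩
    exact ⟨α, ⟨h0, hα, h1⟩, h.mono fun ω => (hasSum_mul_iff_hasSum_mul_sub hα.hasSum _ _ _).1⟩
  · rintro ⟨α, ⟨h0, hα, h1⟩, h⟩
    exact ⟨α, h0, hα, h1, h.mono fun ω => (hasSum_mul_iff_hasSum_mul_sub hα.hasSum _ _ _).2⟩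

lemma tsum_mul_le_sum_range_add_tsum_mul {c ε : ℕ → ℝ≥0∞} {N : ℕ} {η : ℝ≥0∞}
    (hε : ∀ n ≥ N, ε n ≤ η) :
    ∑' n, c n * ε n ≤ ∑ n ∈ range N, c n * ε n + (∑' n, c n) * η := by
  rw [← ENNReal.summable.sum_add_tsum_nat_add']
  gcongr
  calc ∑' n, c (n + N) * ε (n + N) ≤ ∑' n, c (n + N) * η :=
        ENNReal.tsum_le_tsum fun n => by gcongr; exact hε _ (Nat.le_add_left N n)
    _ = (∑' n, c (n + N)) * η := ENNReal.tsum_mul_right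
    _ ≤ (∑' n, c n) * η :=
        mul_le_mul_left (ENNReal.tsum_comp_le_tsum_of_injective (add_left_injective N) c) η

lemma tsum_mul_ne_top_of_tendsto_zero {c ε : ℕ → ℝ≥0∞} (hc : ∑' n, c n ≠ ∞)
    (hε : Tendsto ε atTop (𝓝 0)) (hε_ne_top : ∀ n, ε n ≠ ∞) : ∑' n, c n * ε n ≠ ∞ := by
  obtain ⟨N, hN⟩ := eventually_atTop.1 (ENNReal.tendsto_nhds_zero.1 hε 1 one_pos)
  refine ne_top_of_le_ne_top ?_ (tsum_mul_le_sum_range_add_tsum_mul hN)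
  refine ENNReal.add_ne_top.2 ⟨ENNReal.sum_ne_top.2 fun n _ => ?_, by simpa using hc⟩
  exact ENNReal.mul_ne_top (ne_top_of_le_ne_top hc (ENNReal.le_tsum n)) (hε_ne_top n)

lemma tendsto_tsum_mul_of_tendsto_zero {c : ℕ → ℕ → ℝ≥0∞} {ε : ℕ → ℝ≥0∞} {C : ℝ≥0∞}
    (hC : C ≠ ∞) (hcC : ∀ k, ∑' n, c k n ≤ C) (hc : ∀ n, Tendsto (fun k => c k n) atTop (𝓝 0))
    (hε : Tendsto ε atTop (𝓝 0)) (hε_ne_top : ∀ n, ε n ≠ ∞) :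
    Tendsto (fun k => ∑' n, c k n * ε n) atTop (𝓝 0) := by
  refine ENNReal.tendsto_nhds_zero.2 fun e he => ?_
  obtain ⟨η, hη, hηC⟩ := ENNReal.exists_nnreal_pos_mul_lt hC he.ne'
  obtain ⟨N, hN⟩ := eventually_atTop.1 (ENNReal.tendsto_nhds_zero.1 hε η (by simpa using hη))
  have hhead : Tendsto (fun k => ∑ n ∈ range N, c k n * ε n + C * η) atTop (𝓝 (C * η)) := by
    simpa using (tendsto_finsetSum _ fun n _ =>
      ENNReal.Tendsto.mul_const (hc n) (Or.inr (hε_ne_top n))).add_const (C * (η : ℝ≥0∞))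
  filter_upwards [hhead.eventually (gt_mem_nhds (mul_comm C η ▸ hηC))] with k hk
  calc ∑' n, c k n * ε n ≤ ∑ n ∈ range N, c k n * ε n + (∑' n, c k n) * η :=
        tsum_mul_le_sum_range_add_tsum_mul hN
    _ ≤ ∑ n ∈ range N, c k n * ε n + C * η := by gcongr; exact hcC k
    _ ≤ e := hk.le

section SeriesOfFunctions

variable {Ω E : Type*} [MeasurableSpace Ω] {μ : Measure Ω} [NormedAddCommGroup E]

lemma ae_summable_of_tsum_lintegral_enorm_ne_top [CompleteSpace E] {G : ℕ → Ω → E}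
    (hG : ∀ n, AEStronglyMeasurable (G n) μ) (h : ∑' n, ∫⁻ ω, ‖G n ω‖ₑ ∂μ ≠ ∞) :
    ∀ᵐ ω ∂μ, Summable fun n => G n ω := by
  simp_rw [← eLpNorm_one_eq_lintegral_enorm] at h
  filter_upwards [summable_norm_of_tsum_eLpNorm_ne_top le_rfl hG h] with ω hω
  exact hω.of_norm

lemma lintegral_enorm_le_tsum_of_hasSum {G : ℕ → Ω → E} {H : Ω → E}
    (hG : ∀ n, AEStronglyMeasurable (G n) μ) (hH : ∀ᵐ ω ∂μ, HasSum (fun n => G n ω) (H ω)) :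
    ∫⁻ ω, ‖H ω‖ₑ ∂μ ≤ ∑' n, ∫⁻ ω, ‖G n ω‖ₑ ∂μ := by
  rw [← lintegral_tsum fun n => (hG n).enorm]
  refine lintegral_mono_ae (hH.mono fun ω hω => ?_)
  rw [← hω.tsum_eq]
  exact enorm_tsum_le_tsum_enorm

variable {𝕜 : Type*} [NormedField 𝕜] [NormedSpace 𝕜 E]

lemma lintegral_enorm_const_smul (c : 𝕜) (F : Ω → E) :
    ∫⁻ ω, ‖c • F ω‖ₑ ∂μ = ‖c‖ₑ * ∫⁻ ω, ‖F ω‖ₑ ∂μ := by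
  simp_rw [enorm_smul]
  exact lintegral_const_mul' _ _ enorm_ne_top

lemma lintegral_enorm_le_tsum_enorm_mul_of_hasSum {c : ℕ → 𝕜} {F : ℕ → Ω → E} {H : Ω → E}
    (hF : ∀ n, AEStronglyMeasurable (F n) μ)
    (hH : ∀ᵐ ω ∂μ, HasSum (fun n => c n • F n ω) (H ω)) :
    ∫⁻ ω, ‖H ω‖ₑ ∂μ ≤ ∑' n, ‖c n‖ₑ * ∫⁻ ω, ‖F n ω‖ₑ ∂μ := by
  simpa only [lintegral_enorm_const_smul] using
    lintegral_enorm_le_tsum_of_hasSum (G := fun n ω => c n • F n ω)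
      (fun n => (hF n).const_smul (c n)) hH

lemma ae_summable_smul_of_tendsto_lintegral_enorm [CompleteSpace E] {c : ℕ → 𝕜}
    {F : ℕ → Ω → E} (hc : ∑' n, ‖c n‖ₑ ≠ ∞) (hF : ∀ n, AEStronglyMeasurable (F n) μ)
    (hF_ne_top : ∀ n, ∫⁻ ω, ‖F n ω‖ₑ ∂μ ≠ ∞)
    (hF_tendsto : Tendsto (fun n => ∫⁻ ω, ‖F n ω‖ₑ ∂μ) atTop (𝓝 0)) :
    ∀ᵐ ω ∂μ, Summable fun n => c n • F n ω := by
  refine ae_summable_of_tsum_lintegral_enorm_ne_top (G := fun n ω => c n • F n ω)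
    (fun n => (hF n).const_smul (c n)) ?_
  simpa only [lintegral_enorm_const_smul] using
    tsum_mul_ne_top_of_tendsto_zero hc hF_tendsto hF_ne_top

lemma integrable_of_tendsto_lintegral_enorm_sub {f : ℕ → Ω → E} {g : Ω → E}
    (hf : ∀ n, Integrable (f n) μ) (hg : AEStronglyMeasurable g μ)
    (h : Tendsto (fun n => ∫⁻ ω, ‖f n ω - g ω‖ₑ ∂μ) atTop (𝓝 0)) : Integrable g μ := by
  obtain ⟨m, hm⟩ := (h.eventually (gt_mem_nhds one_pos)).exists
  have hfg : Integrable (fun ω => f m ω - g ω) μ :=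
    ⟨(hf m).1.sub hg, hm.trans ENNReal.one_lt_top⟩
  simpa [Pi.sub_def] using (hf m).sub hfg

end SeriesOfFunctions

theorem stmt6_general {Ω : Type*} [MeasurableSpace Ω] (Q : Measure Ω)
    (f : ℕ → Ω → ℝ) (flim : Ω → ℝ)
    (hfmeas : ∀ n, Measurable (f n)) (hfnn : ∀ n, 0 ≤ᵐ[Q] f n)
    (hflimmeas : Measurable flim)
    (hsup : (⨆ n, ∫⁻ ω, ENNReal.ofReal (f n ω) ∂Q) < ⊤)
    (hL1 : Tendsto (fun n => ∫⁻ ω, ENNReal.ofReal |f n ω - flim ω| ∂Q) atTop (nhds 0))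
    (g : ℕ → Ω → ℝ) (hg : ∀ k, MemCountableConvex Q f flim (g k)) :
    ∃ φ : ℕ → ℕ, StrictMono φ ∧ ∃ glim : Ω → ℝ,
      MemCountableConvex Q f flim glim ∧
      Tendsto (fun k => ∫⁻ ω, ENNReal.ofReal |g (φ k) ω - glim ω| ∂Q) atTop (nhds 0) := by
  simp_rw [← Real.enorm_eq_ofReal_abs] at hL1 ⊢
  have hF (n : ℕ) : AEStronglyMeasurable (fun ω => f n ω - flim ω) Q :=
    ((hfmeas n).sub hflimmeas).aestronglyMeasurable
  have hf_int (n : ℕ) : Integrable (f n) Q :=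
    ⟨(hfmeas n).aestronglyMeasurable, (hasFiniteIntegral_iff_ofReal (hfnn n)).2
      ((le_iSup (fun n => ∫⁻ ω, ENNReal.ofReal (f n ω) ∂Q) n).trans_lt hsup)⟩
  have hflim_int : Integrable flim Q :=
    integrable_of_tendsto_lintegral_enorm_sub hf_int hflimmeas.aestronglyMeasurable hL1
  have hF_ne_top (n : ℕ) : ∫⁻ ω, ‖f n ω - flim ω‖ₑ ∂Q ≠ ∞ := ((hf_int n).sub hflim_int).2.ne
  choose α hα hgα using fun k => memCountableConvex_iff.1 (hg k)
  obtain ⟨β, hβ, φ, hφ, hαβ⟩ := isCompact_countableSimplex.tendsto_subseq hα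
  have hβ_summable : ∀ᵐ ω ∂Q, Summable fun n => β n * (f n ω - flim ω) :=
    ae_summable_smul_of_tendsto_lintegral_enorm (c := β)
      (ne_top_of_le_ne_top ENNReal.one_ne_top (tsum_enorm_le_one_of_mem_countableSimplex hβ))
      hF hF_ne_top hL1
  set glim := fun ω => flim ω + ∑' n, β n * (f n ω - flim ω)
  have hglim : ∀ᵐ ω ∂Q, HasSum (fun n => β n * (f n ω - flim ω)) (glim ω - flim ω) :=
    hβ_summable.mono fun ω hω => by simpa [glim] using hω.hasSum
  refine ⟨φ, hφ, glim, memCountableConvex_iff.2 ⟨β, hβ, hglim⟩, ?_⟩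
  have hbound (k : ℕ) : ∫⁻ ω, ‖g (φ k) ω - glim ω‖ₑ ∂Q ≤
      ∑' n, ‖α (φ k) n - β n‖ₑ * ∫⁻ ω, ‖f n ω - flim ω‖ₑ ∂Q := by
    refine lintegral_enorm_le_tsum_enorm_mul_of_hasSum (c := fun n => α (φ k) n - β n) hF ?_
    filter_upwards [hgα (φ k), hglim] with ω hα hβ
    simpa [sub_mul] using hα.sub hβ
  have hcoeff (n : ℕ) : Tendsto (fun k => ‖α (φ k) n - β n‖ₑ) atTop (𝓝 0) := by
    simpa [edist_eq_enorm_sub] using tendsto_iff_edist_tendsto_0.1 (tendsto_pi_nhds.1 hαβ n)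
  exact tendsto_of_tendsto_of_tendsto_of_le_of_le tendsto_const_nhds
    (tendsto_tsum_mul_of_tendsto_zero ENNReal.ofNat_ne_top
      (fun k => tsum_enorm_sub_le_two (hα (φ k)) hβ) hcoeff hL1 hF_ne_top)
    (fun _ => zero_le) hbound

theorem stmt6 {Ω : Type*} [MeasurableSpace Ω] (Q : Measure Ω)
    [IsProbabilityMeasure Q]
    (f : ℕ → Ω → ℝ) (flim : Ω → ℝ)
    (hfmeas : ∀ n, Measurable (f n)) (hfnn : ∀ n, 0 ≤ᵐ[Q] f n)
    (hflimmeas : Measurable flim) (hflimnn : 0 ≤ᵐ[Q] flim)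
    (hsup : (⨆ n, ∫⁻ ω, ENNReal.ofReal (f n ω) ∂Q) < ⊤)
    (hL1 : Tendsto (fun n => ∫⁻ ω, ENNReal.ofReal |f n ω - flim ω| ∂Q) atTop (nhds 0))
    (g : ℕ → Ω → ℝ) (hg : ∀ k, MemCountableConvex Q f flim (g k)) :
    ∃ φ : ℕ → ℕ, StrictMono φ ∧ ∃ glim : Ω → ℝ,
      MemCountableConvex Q f flim glim ∧
      Tendsto (fun k => ∫⁻ ω, ENNReal.ofReal |g (φ k) ω - glim ω| ∂Q) atTop (nhds 0) :=
  stmt6_general Q f flim hfmeas hfnn hflimmeas hsup hL1 g hg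
end

section
/- Let (Ω, 𝓕, P) be a probability space and (g_n)_{n∈ℕ} a sequence of nonnegative a.e.-finite measurable functions. Then there exist a measurable function h : Ω → [0,∞] and a sequence (h_n) of forward convex combinations of (g_n) such that (h_n) converges to h P-a.e. If, moreover, the convex hull of {g_n : n ∈ ℕ} is bounded in probability, then h < ∞ P-a.e. -/
/-!
The concave functional `U f = E[1 - exp (-f)]` is bounded on the forward hulls
`C n = conv {g k | k ≥ n}`, so one can pick `f n ∈ C n` with `U y ≤ U (f m) + ε n` for all
`y ∈ C n` and `n ≤ m`, where `ε n → 0`. The midpoint of `f n` and `f m` lies in `C n`, so the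
identity
`(e^{-x/2} - e^{-y/2})² = 2 (1 - e^{-(x+y)/2}) - (1 - e^{-x}) - (1 - e^{-y})`
gives `E[(e^{-f n/2} - e^{-f m/2})²] ≤ 2 ε n`. Along a fast subsequence, Markov's inequality and
Borel–Cantelli make `e^{-f n/2}` converge a.e., hence `f n` converges a.e. in `[0, ∞]`.
If the hull is bounded in probability, `P (f n > ℓ)` is uniformly small for large `ℓ`, so the
limit is a.e. finite.
-/

open MeasureTheory Filter Set

/-- A set `B` of (nonnegative) functions is bounded in probability with respect to `P`:
`sup_{b ∈ B} P(b > ℓ) → 0` as `ℓ → ∞`. -/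
def BddInProbability {Ω : Type*} [MeasurableSpace Ω] (P : MeasureTheory.Measure Ω)
    (B : Set (Ω → ℝ)) : Prop :=
  Tendsto (fun ℓ : ℝ => ⨆ b ∈ B, P {ω | ℓ < b ω}) atTop (nhds 0)

open Topology
open scoped ENNReal

lemma Real.exp_neg_half_sub_exp_neg_half_sq (x y : ℝ) :
    (Real.exp (-x / 2) - Real.exp (-y / 2)) ^ 2 =
      2 * (1 - Real.exp (-midpoint ℝ x y)) - (1 - Real.exp (-x)) - (1 - Real.exp (-y)) := by
  have hmid : Real.exp (-midpoint ℝ x y) = Real.exp (-x / 2) * Real.exp (-y / 2) := by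
    rw [← Real.exp_add, midpoint_eq_smul_add]; congr 1; simp; ring
  have hx : Real.exp (-x) = Real.exp (-x / 2) ^ 2 := by rw [sq, ← Real.exp_add]; ring_nf
  have hy : Real.exp (-y) = Real.exp (-y / 2) ^ 2 := by rw [sq, ← Real.exp_add]; ring_nf
  rw [hmid, hx, hy]; ring

section ForwardHull

variable {E : Type*} [AddCommGroup E] [Module ℝ E] (g : ℕ → E)

def fwdHull (n : ℕ) : Set E := convexHull ℝ {f | ∃ k, n ≤ k ∧ f = g k}

lemma fwdHull_antitone : Antitone (fwdHull g) := fun _ _ hnm =>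
  convexHull_mono fun _ ⟨k, hk, hf⟩ => ⟨k, hnm.trans hk, hf⟩

lemma self_mem_fwdHull (n : ℕ) : g n ∈ fwdHull g n :=
  subset_convexHull ℝ _ ⟨n, le_rfl, rfl⟩

lemma fwdHull_subset_convexHull_range (n : ℕ) : fwdHull g n ⊆ convexHull ℝ (range g) :=
  convexHull_mono fun _ ⟨k, _, hf⟩ => ⟨k, hf.symm⟩

lemma fwdHull_subset_of_convex {s : Set E} (hs : Convex ℝ s) (hg : ∀ k, g k ∈ s) (n : ℕ) :
    fwdHull g n ⊆ s :=
  convexHull_min (fun _ ⟨k, _, hf⟩ => hf ▸ hg k) hs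

end ForwardHull

lemma exists_seq_forall_le_add_of_antitone {α : Type*} {C : ℕ → Set α} (hC : Antitone C)
    (hne : ∀ n, (C n).Nonempty) (I : α → ℝ) (hI_above : BddAbove (I '' C 0))
    (hI_below : BddBelow (I '' C 0)) :
    ∃ x : ℕ → α, (∀ n, x n ∈ C n) ∧ ∃ ε : ℕ → ℝ, Tendsto ε atTop (𝓝 0) ∧
      ∀ n m, n ≤ m → ∀ y ∈ C n, I y ≤ I (x m) + ε n := by
  set S : ℕ → ℝ := fun n => sSup (I '' C n)
  have hSne n : (I '' C n).Nonempty := (hne n).image I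
  have hSbdd n : BddAbove (I '' C n) := hI_above.mono (image_mono (hC (Nat.zero_le n)))
  have hS_anti : Antitone S := fun n m hnm =>
    csSup_le_csSup (hSbdd n) (hSne m) (image_mono (hC hnm))
  have hS_bddBelow : BddBelow (range S) := by
    obtain ⟨M, hM⟩ := hI_below
    refine ⟨M, forall_mem_range.2 fun n => ?_⟩
    obtain ⟨y, hy⟩ := hne n
    exact (hM (mem_image_of_mem I (hC (Nat.zero_le n) hy))).trans
      (le_csSup (hSbdd n) (mem_image_of_mem I hy))
  have hx n : ∃ x ∈ C n, S n - 1 / (n + 1) < I x := by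
    obtain ⟨_, ⟨x, hx, rfl⟩, hlt⟩ :=
      exists_lt_of_lt_csSup (hSne n) (sub_lt_self (S n) Nat.one_div_pos_of_nat)
    exact ⟨x, hx, hlt⟩
  choose x hxC hxI using hx
  obtain ⟨s, hSs, hsS⟩ : ∃ s, Tendsto S atTop (𝓝 s) ∧ ∀ m, s ≤ S m :=
    ⟨_, tendsto_atTop_ciInf hS_anti hS_bddBelow, ciInf_le hS_bddBelow⟩
  refine ⟨x, hxC, fun n => S n - s + 1 / (n + 1), ?_, fun n m hnm y hy => ?_⟩
  · simpa using (hSs.sub_const s).add tendsto_one_div_add_atTop_nhds_zero_nat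
  · have hyS : I y ≤ S n := le_csSup (hSbdd n) (mem_image_of_mem I hy)
    have hm : 1 / ((m : ℝ) + 1) ≤ 1 / (n + 1) := Nat.one_div_le_one_div hnm
    linarith [hxI m, hsS m]

section Measure

variable {Ω : Type*} [MeasurableSpace Ω] {P : Measure Ω}

lemma convex_setOf_measurable_ae_nonneg :
    Convex ℝ {f : Ω → ℝ | Measurable f ∧ 0 ≤ᵐ[P] f} := by
  rintro f ⟨hf, hf0⟩ f' ⟨hf', hf'0⟩ a b ha hb -
  refine ⟨(hf.const_smul a).add (hf'.const_smul b), ?_⟩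
  filter_upwards [hf0, hf'0] with ω h h'
  simp only [Pi.zero_apply, Pi.add_apply, Pi.smul_apply, smul_eq_mul] at h h' ⊢
  positivity

variable (P) in
noncomputable def expUtility (f : Ω → ℝ) : ℝ := ∫ ω, (1 - Real.exp (-f ω)) ∂P

lemma integrable_one_sub_exp_neg [IsFiniteMeasure P] {f : Ω → ℝ} (hf : Measurable f)
    (hf0 : 0 ≤ᵐ[P] f) : Integrable (fun ω => 1 - Real.exp (-f ω)) P := by
  refine .of_bound (by fun_prop) 1 ?_
  filter_upwards [hf0] with ω h
  rw [Real.norm_eq_abs, abs_le]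
  constructor <;> linarith [Real.exp_pos (-f ω), Real.exp_le_one_iff.2 (neg_nonpos.2 h)]

lemma expUtility_nonneg {f : Ω → ℝ} (hf0 : 0 ≤ᵐ[P] f) : 0 ≤ expUtility P f := by
  refine integral_nonneg_of_ae ?_
  filter_upwards [hf0] with ω h
  simpa using Real.exp_le_one_iff.2 (neg_nonpos.2 h)

lemma expUtility_le_one [IsProbabilityMeasure P] {f : Ω → ℝ} (hf0 : 0 ≤ᵐ[P] f) :
    expUtility P f ≤ 1 := by
  have hle : ∫ ω, (1 - Real.exp (-f ω)) ∂P ≤ ∫ _, (1 : ℝ) ∂P := by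
    refine integral_mono_of_nonneg ?_ (integrable_const 1) (ae_of_all _ fun ω => ?_)
    · filter_upwards [hf0] with ω h
      simpa using Real.exp_le_one_iff.2 (neg_nonpos.2 h)
    · simp [(Real.exp_pos (-f ω)).le]
  simpa [expUtility] using hle

lemma integrable_sq_exp_neg_half_sub [IsFiniteMeasure P] {f f' : Ω → ℝ} (hf : Measurable f)
    (hf0 : 0 ≤ᵐ[P] f) (hf' : Measurable f') (hf'0 : 0 ≤ᵐ[P] f') :
    Integrable (fun ω => (Real.exp (-f ω / 2) - Real.exp (-f' ω / 2)) ^ 2) P := by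
  refine .of_bound (by fun_prop) 1 ?_
  filter_upwards [hf0, hf'0] with ω h h'
  simp only [Pi.zero_apply] at h h'
  have hx := Real.exp_le_one_iff.2 (by linarith : -f ω / 2 ≤ 0)
  have hy := Real.exp_le_one_iff.2 (by linarith : -f' ω / 2 ≤ 0)
  rw [Real.norm_eq_abs, abs_of_nonneg (sq_nonneg _)]
  nlinarith [Real.exp_pos (-f ω / 2), Real.exp_pos (-f' ω / 2)]

lemma integral_sq_exp_neg_half_sub [IsFiniteMeasure P] {f f' : Ω → ℝ} (hf : Measurable f)
    (hf0 : 0 ≤ᵐ[P] f) (hf' : Measurable f') (hf'0 : 0 ≤ᵐ[P] f') :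
    ∫ ω, (Real.exp (-f ω / 2) - Real.exp (-f' ω / 2)) ^ 2 ∂P =
      2 * expUtility P (midpoint ℝ f f') - expUtility P f - expUtility P f' := by
  have hmid := (convex_setOf_measurable_ae_nonneg (P := P)).midpoint_mem ⟨hf, hf0⟩ ⟨hf', hf'0⟩
  have hint := integrable_one_sub_exp_neg hmid.1 hmid.2
  have hpt ω : (Real.exp (-f ω / 2) - Real.exp (-f' ω / 2)) ^ 2 =
      2 * (1 - Real.exp (-midpoint ℝ f f' ω)) - (1 - Real.exp (-f ω)) - (1 - Real.exp (-f' ω)) :=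
    Real.exp_neg_half_sub_exp_neg_half_sq _ _
  simp_rw [hpt]
  have h₂ := hint.const_mul 2
  have h₁ := integrable_one_sub_exp_neg hf hf0
  rw [integral_sub ?_ (integrable_one_sub_exp_neg hf' hf'0), integral_sub h₂ h₁,
    integral_const_mul]
  · rfl
  · exact h₂.sub h₁

lemma ae_exists_tendsto_of_integral_sq_sub_le [IsFiniteMeasure P] {F : ℕ → Ω → ℝ}
    (hint : ∀ k, Integrable (fun ω => (F k ω - F (k + 1) ω) ^ 2) P)
    (hF : ∀ k, ∫ ω, (F k ω - F (k + 1) ω) ^ 2 ∂P ≤ (1 / 8) ^ k) :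
    ∀ᵐ ω ∂P, ∃ l, Tendsto (fun k => F k ω) atTop (𝓝 l) := by
  set A : ℕ → Set Ω := fun k => {ω | ((1 / 2 : ℝ) ^ k) ^ 2 ≤ (F k ω - F (k + 1) ω) ^ 2}
  have hA k : P (A k) ≤ ENNReal.ofReal ((1 / 2) ^ k) := by
    have hcheb := (mul_meas_ge_le_integral_of_nonneg (ae_of_all _ fun ω => sq_nonneg _) (hint k)
      (((1 / 2 : ℝ) ^ k) ^ 2)).trans (hF k)
    have h8 : ((1 / 2 : ℝ) ^ k) ^ 2 * (1 / 2) ^ k = (1 / 8) ^ k := by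
      rw [sq, ← mul_pow, ← mul_pow]; norm_num
    rw [ENNReal.le_ofReal_iff_toReal_le (measure_ne_top _ _) (by positivity), ← measureReal_def]
    exact le_of_mul_le_mul_left (h8 ▸ hcheb) (by positivity)
  have hsum : ∑' k, P (A k) ≠ ∞ := by
    refine ne_top_of_le_ne_top ?_ (ENNReal.tsum_le_tsum hA)
    rw [← ENNReal.ofReal_tsum_of_nonneg (fun k => by positivity) summable_geometric_two]
    exact ENNReal.ofReal_ne_top
  filter_upwards [ae_eventually_notMem hsum] with ω hω
  have hdist : ∀ᶠ k in atTop, ‖dist (F k ω) (F (k + 1) ω)‖ ≤ (1 / 2) ^ k := by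
    filter_upwards [hω] with k hk
    rw [Real.norm_of_nonneg dist_nonneg, Real.dist_eq]
    exact (abs_lt_of_sq_lt_sq (not_le.1 hk) (by positivity)).le
  exact cauchySeq_tendsto_of_complete
    (cauchySeq_of_summable_dist (summable_geometric_two.of_norm_bounded_eventually_nat hdist))

lemma exists_tendsto_ofReal_of_tendsto_exp_neg_half {y : ℕ → ℝ} {l : ℝ}
    (hy : Tendsto (fun k => Real.exp (-y k / 2)) atTop (𝓝 l)) :
    ∃ a : ℝ≥0∞, Tendsto (fun k => ENNReal.ofReal (y k)) atTop (𝓝 a) := by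
  have hlog k : -2 * Real.log (Real.exp (-y k / 2)) = y k := by rw [Real.log_exp]; ring
  rcases (ge_of_tendsto' hy fun k => (Real.exp_pos _).le).eq_or_lt with rfl | hl
  · have hy' : Tendsto (fun k => Real.exp (-y k / 2)) atTop (𝓝[>] 0) :=
      tendsto_nhdsWithin_iff.2 ⟨hy, .of_forall fun k => Real.exp_pos _⟩
    refine ⟨∞, ENNReal.tendsto_ofReal_atTop.comp ?_⟩
    exact ((Real.tendsto_log_nhdsGT_zero.comp hy').const_mul_atBot_of_neg (by norm_num)).congr hlog
  · refine ⟨ENNReal.ofReal (-2 * Real.log l), ENNReal.tendsto_ofReal ?_⟩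
    exact (((Real.continuousAt_log hl.ne').tendsto.comp hy).const_mul (-2)).congr hlog

lemma ae_lt_top_of_tendsto_of_bddInProbability {B : Set (Ω → ℝ)} (hB : BddInProbability P B)
    {b : ℕ → Ω → ℝ} (hb : ∀ k, b k ∈ B) {h : Ω → ℝ≥0∞}
    (hlim : ∀ᵐ ω ∂P, Tendsto (fun k => ENNReal.ofReal (b k ω)) atTop (𝓝 (h ω))) :
    ∀ᵐ ω ∂P, h ω < ∞ := by
  suffices hzero : P {ω | h ω = ∞} = 0 by
    filter_upwards [measure_eq_zero_iff_ae_notMem.1 hzero] with ω hω using lt_top_iff_ne_top.2 hω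
  refine le_antisymm (ge_of_tendsto' hB fun ℓ => ?_) zero_le
  have hmono : Monotone fun K => ⋂ k ≥ K, {ω | ℓ < b k ω} := fun K K' hKK' =>
    biInter_mono (fun k hk => hKK'.trans hk) fun _ _ => subset_rfl
  calc P {ω | h ω = ∞} ≤ P (⋃ K, ⋂ k ≥ K, {ω | ℓ < b k ω}) := by
        refine measure_mono_ae (hlim.mono fun ω hω (htop : h ω = ∞) => ?_)
        rw [htop] at hω
        obtain ⟨K, hK⟩ := eventually_atTop.1 (hω.eventually (lt_mem_nhds ENNReal.ofReal_lt_top))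
        exact mem_iUnion.2
          ⟨K, mem_iInter₂.2 fun k hk => (ENNReal.ofReal_lt_ofReal_iff'.1 (hK k hk)).1⟩
    _ = ⨆ K, P (⋂ k ≥ K, {ω | ℓ < b k ω}) := hmono.measure_iUnion
    _ ≤ ⨆ b ∈ B, P {ω | ℓ < b ω} :=
        iSup_le fun K => (measure_mono (iInter₂_subset K le_rfl)).trans
          (le_biSup (fun b => P {ω | ℓ < b ω}) (hb K))

end Measure

theorem stmt10 {Ω : Type*} [MeasurableSpace Ω] (P : Measure Ω)
    [IsProbabilityMeasure P]
    (g : ℕ → Ω → ℝ)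
    (hgmeas : ∀ n, Measurable (g n)) (hgnn : ∀ n, 0 ≤ᵐ[P] g n) :
    ∃ (h : Ω → ENNReal) (hn : ℕ → Ω → ℝ), Measurable h ∧ FwdConvexCombos g hn ∧
      (∀ᵐ ω ∂P, Tendsto (fun n => ENNReal.ofReal (hn n ω)) atTop (nhds (h ω))) ∧
      (BddInProbability P (convexHull ℝ (Set.range g)) → ∀ᵐ ω ∂P, h ω < ⊤) := by
  have hC n : fwdHull g n ⊆ {f | Measurable f ∧ 0 ≤ᵐ[P] f} :=
    fwdHull_subset_of_convex g convex_setOf_measurable_ae_nonneg (fun k => ⟨hgmeas k, hgnn k⟩) n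
  obtain ⟨f, hfC, ε, hε, hmax⟩ := exists_seq_forall_le_add_of_antitone (fwdHull_antitone g)
    (fun n => ⟨g n, self_mem_fwdHull g n⟩) (expUtility P)
    ⟨1, forall_mem_image.2 fun f hf => expUtility_le_one (hC 0 hf).2⟩
    ⟨0, forall_mem_image.2 fun f hf => expUtility_nonneg (hC 0 hf).2⟩
  have hf n : Measurable (f n) ∧ 0 ≤ᵐ[P] f n := hC n (hfC n)
  have hcauchy n m (hnm : n ≤ m) :
      ∫ ω, (Real.exp (-f n ω / 2) - Real.exp (-f m ω / 2)) ^ 2 ∂P ≤ 2 * ε n := by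
    have hmid : midpoint ℝ (f n) (f m) ∈ fwdHull g n :=
      (convex_convexHull ℝ _).midpoint_mem (hfC n) (fwdHull_antitone g hnm (hfC m))
    rw [integral_sq_exp_neg_half_sub (hf n).1 (hf n).2 (hf m).1 (hf m).2]
    linarith [hmax n n le_rfl _ hmid, hmax n m hnm _ hmid]
  obtain ⟨φ, hφ, hφε⟩ := extraction_forall_of_eventually fun k =>
    (by simpa using hε.const_mul 2 : Tendsto (fun n => 2 * ε n) atTop (𝓝 0)).eventually_le_const
      (by positivity : (0 : ℝ) < (1 / 8) ^ k)
  have hconv : ∀ᵐ ω ∂P, ∃ l, Tendsto (fun k => Real.exp (-f (φ k) ω / 2)) atTop (𝓝 l) :=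
    ae_exists_tendsto_of_integral_sq_sub_le
      (fun k => integrable_sq_exp_neg_half_sub (hf _).1 (hf _).2 (hf _).1 (hf _).2)
      (fun k => (hcauchy _ _ (hφ.monotone k.le_succ)).trans (hφε k))
  obtain ⟨h, hmeas, hlim⟩ := measurable_limit_of_tendsto_metrizable_ae
    (fun k => (hf (φ k)).1.ennreal_ofReal.aemeasurable)
    (hconv.mono fun ω ⟨_, hl⟩ => exists_tendsto_ofReal_of_tendsto_exp_neg_half hl)
  refine ⟨h, fun k => f (φ k), hmeas, fun k => fwdHull_antitone g (hφ.id_le k) (hfC (φ k)),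
    hlim, fun hB => ?_⟩
  exact ae_lt_top_of_tendsto_of_bddInProbability hB
    (fun k => fwdHull_subset_convexHull_range g _ (hfC (φ k))) hlim
end

section
/- Let Ω = (0,1] with the Borel σ-field and Lebesgue measure P, and for n = 2^{m−1} + k − 1 with m ∈ ℕ (m ≥ 1) and 1 ≤ k ≤ 2^{m−1}, define f_n = (m − 1)·2^{m−1}·1_{((k−1)/2^{m−1}, k/2^{m−1}]}. Then (f_n)_{n∈ℕ} converges to 0 in probability, yet for every nonnegative a.e.-finite measurable function f on Ω there exists a sequence (h_n) of forward convex combinations of (f_n) converging to f in probability. -/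
/-!
Write `n = 2^j + k - 1` with `1 ≤ k ≤ 2^j`: then `f n` is the spike of height `j 2^j` on the
`k`-th dyadic interval of level `j`, whose length `2^{-j} ≤ 2/n` tends to `0`; hence `f n → 0` in
measure.

Conversely, a convex combination of the level-`j` spikes with weights `a k / (j 2^j)` equals `a k`
on the `k`-th interval, provided `0 ≤ a k ≤ j`; the leftover weight goes to the first spike and
only spoils `(0, 2^{-j}]`. Taking for `a` the dyadic samples of a nonnegative continuous
approximation `c` of `g` (continuous functions are dense in measure), uniform continuity of `c` on
`[0, 1]` makes this combination close to `g` outside a set of small measure, and `j` can be taken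
as large as we like, so these combinations are forward.
-/

open MeasureTheory Filter Set

open scoped Topology

section InMeasure

variable {α : Type*} [MeasurableSpace α] {μ : Measure α}

lemma measure_le_dist_le_of_halves {E : Type*} [PseudoMetricSpace E] {a b c : α → E} {δ : ℝ}
    (hδ : 0 ≤ δ) (hab : μ {x | δ / 2 ≤ dist (a x) (b x)} ≤ ENNReal.ofReal (δ / 2))
    (hbc : μ {x | δ / 2 ≤ dist (b x) (c x)} ≤ ENNReal.ofReal (δ / 2)) :
    μ {x | δ ≤ dist (a x) (c x)} ≤ ENNReal.ofReal δ := by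
  have hsub : {x | δ ≤ dist (a x) (c x)} ⊆
      {x | δ / 2 ≤ dist (a x) (b x)} ∪ {x | δ / 2 ≤ dist (b x) (c x)} := by
    intro x (hx : δ ≤ dist (a x) (c x))
    rcases le_or_gt (δ / 2) (dist (a x) (b x)) with h | h
    · exact Or.inl h
    · exact Or.inr (by linarith [dist_triangle (a x) (b x) (c x)] : δ / 2 ≤ dist (b x) (c x))
  calc μ {x | δ ≤ dist (a x) (c x)}
      ≤ μ {x | δ / 2 ≤ dist (a x) (b x)} + μ {x | δ / 2 ≤ dist (b x) (c x)} :=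
        (measure_mono hsub).trans (measure_union_le _ _)
    _ ≤ ENNReal.ofReal (δ / 2) + ENNReal.ofReal (δ / 2) := add_le_add hab hbc
    _ = ENNReal.ofReal δ := by rw [← ENNReal.ofReal_add (by linarith) (by linarith), add_halves]

lemma tendstoInMeasure_zero_of_tendsto_measure_support {ι E : Type*} [PseudoEMetricSpace E]
    [Zero E] {l : Filter ι} {f : ι → α → E}
    (hf : Tendsto (fun i => μ (Function.support (f i))) l (𝓝 0)) :
    TendstoInMeasure μ f l 0 := by
  intro ε hε
  refine tendsto_of_tendsto_of_tendsto_of_le_of_le tendsto_const_nhds hf (fun _ => zero_le)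
    fun i => measure_mono fun x hx h0 => ?_
  have hx : ε ≤ edist (f i x) 0 := hx
  rw [h0, edist_self] at hx
  exact hε.ne' (le_zero_iff.1 hx)

lemma exists_fwdConvexCombos_tendstoInMeasure {f : ℕ → α → ℝ} {g : α → ℝ}
    (happrox : ∀ (N : ℕ) (δ : ℝ), 0 < δ → ∃ h ∈ convexHull ℝ {φ | ∃ k, N ≤ k ∧ φ = f k},
      μ {x | δ ≤ dist (h x) (g x)} ≤ ENNReal.ofReal δ) :
    ∃ h, FwdConvexCombos f h ∧ TendstoInMeasure μ h atTop g := by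
  choose h hmem hμ using fun n : ℕ => happrox n (1 / (n + 1)) Nat.one_div_pos_of_nat
  refine ⟨h, hmem, tendstoInMeasure_iff_dist.2 fun ε hε => ?_⟩
  have hlim : Tendsto (fun n : ℕ => ENNReal.ofReal (1 / (n + 1))) atTop (𝓝 0) := by
    simpa using ENNReal.tendsto_ofReal tendsto_one_div_add_atTop_nhds_zero_nat
  refine tendsto_of_tendsto_of_tendsto_of_le_of_le' tendsto_const_nhds hlim
    (Eventually.of_forall fun _ => zero_le) ?_
  filter_upwards [tendsto_one_div_add_atTop_nhds_zero_nat.eventually (eventually_le_nhds hε)]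
    with n hn
  exact (measure_mono fun x hx => hn.trans hx).trans (hμ n)

lemma measure_le_dist_le_of_lintegral_le {f g : α → ℝ} (hf : Measurable f) (hg : Measurable g)
    {δ : ℝ} (hδ : 0 < δ)
    (hfg : ∫⁻ x, ‖f x - g x‖ₑ ∂μ ≤ ENNReal.ofReal δ * ENNReal.ofReal δ) :
    μ {x | δ ≤ dist (f x) (g x)} ≤ ENNReal.ofReal δ := by
  have hmarkov := mul_meas_ge_le_lintegral₀ (μ := μ) (hf.sub hg).enorm.aemeasurable
    (ENNReal.ofReal δ)
  refine (ENNReal.mul_le_mul_iff_right (by simpa using hδ) ENNReal.ofReal_ne_top).1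
    (le_trans ?_ (hmarkov.trans hfg))
  gcongr with x
  intro (hx : δ ≤ dist (f x) (g x))
  rwa [Pi.sub_apply, ← ofReal_norm, ← dist_eq_norm,
    ENNReal.ofReal_le_ofReal_iff dist_nonneg]

variable [TopologicalSpace α] [NormalSpace α] [BorelSpace α] [IsFiniteMeasure μ] [μ.WeaklyRegular]

lemma exists_continuous_measure_dist_le {g : α → ℝ} (hg : Measurable g) {δ : ℝ} (hδ : 0 < δ) :
    ∃ c : α → ℝ, Continuous c ∧ μ {x | δ ≤ dist (c x) (g x)} ≤ ENNReal.ofReal δ := by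
  set φ : ℕ → α → ℝ := fun n => {x | |g x| ≤ n}.indicator g
  have hφm (n : ℕ) : Measurable (φ n) :=
    hg.indicator (measurableSet_le hg.abs measurable_const)
  have hφg : TendstoInMeasure μ φ atTop g := by
    refine tendstoInMeasure_of_tendsto_ae (fun n => (hφm n).aestronglyMeasurable)
      (ae_of_all _ fun x => tendsto_const_nhds.congr' ?_)
    filter_upwards [tendsto_natCast_atTop_atTop.eventually_ge_atTop |g x|] with n hn
    exact (indicator_of_mem (show x ∈ {y | |g y| ≤ (n : ℝ)} from hn) g).symm
  obtain ⟨n, hn⟩ := ((tendstoInMeasure_iff_dist.1 hφg (δ / 2) (half_pos hδ)).eventually_lt_const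
    (ENNReal.ofReal_pos.2 (half_pos hδ))).exists
  have hφint : Integrable (φ n) μ := by
    refine .of_bound (hφm n).aestronglyMeasurable n (ae_of_all _ fun x => ?_)
    by_cases hx : |g x| ≤ n <;> simp [φ, hx]
  obtain ⟨c, hc, -⟩ := hφint.exists_boundedContinuous_lintegral_sub_le
    (ε := ENNReal.ofReal (δ / 2) * ENNReal.ofReal (δ / 2)) (by simpa using hδ)
  refine ⟨c, c.continuous, measure_le_dist_le_of_halves hδ.le ?_ hn.le⟩
  simpa only [dist_comm] using
    measure_le_dist_le_of_lintegral_le (hφm n) c.continuous.measurable (half_pos hδ) hc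

lemma exists_continuous_nonneg_measure_dist_le {g : α → ℝ} (hg : Measurable g) (hg0 : 0 ≤ᵐ[μ] g)
    {δ : ℝ} (hδ : 0 < δ) :
    ∃ c : α → ℝ, Continuous c ∧ 0 ≤ c ∧ μ {x | δ ≤ dist (c x) (g x)} ≤ ENNReal.ofReal δ := by
  obtain ⟨c, hc, hcg⟩ := exists_continuous_measure_dist_le (μ := μ) hg hδ
  refine ⟨fun x => max (c x) 0, hc.max continuous_const, fun x => le_max_right _ _,
    le_trans (measure_mono_ae ?_) hcg⟩
  filter_upwards [hg0] with x hx hδx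
  have := abs_max_sub_max_le_abs (c x) (g x) 0
  rw [max_eq_left (show (0 : ℝ) ≤ g x from hx)] at this
  exact le_trans hδx (by simpa [Real.dist_eq] using this)

end InMeasure

def dyadicInterval (j k : ℕ) : Set ℝ := Ioc (((k : ℝ) - 1) / 2 ^ j) ((k : ℝ) / 2 ^ j)

noncomputable def dyadicSpike (j k : ℕ) : ℝ → ℝ :=
  (dyadicInterval j k).indicator fun _ => (j : ℝ) * 2 ^ j

lemma mem_dyadicInterval_iff {j k : ℕ} (hk : 1 ≤ k) {x : ℝ} :
    x ∈ dyadicInterval j k ↔ ⌈x * 2 ^ j⌉₊ = k := by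
  have h2 : (0 : ℝ) < 2 ^ j := by positivity
  rw [Nat.ceil_eq_iff (by omega), dyadicInterval, mem_Ioc, div_lt_iff₀ h2, le_div_iff₀ h2,
    Nat.cast_sub hk, Nat.cast_one]

lemma ceil_mul_two_pow_mem_Icc (j : ℕ) {x : ℝ} (hx : x ∈ Ioc (0 : ℝ) 1) :
    ⌈x * 2 ^ j⌉₊ ∈ Finset.Icc 1 (2 ^ j) := by
  have h2 : (0 : ℝ) < 2 ^ j := by positivity
  rw [Finset.mem_Icc, Nat.one_le_ceil_iff, Nat.ceil_le]
  push_cast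
  constructor <;> nlinarith [hx.1, hx.2]

lemma volume_dyadicInterval (j k : ℕ) :
    volume (dyadicInterval j k) = ENNReal.ofReal (1 / 2 ^ j) := by
  rw [dyadicInterval, Real.volume_Ioc, ← sub_div, sub_sub_cancel]

lemma sum_smul_dyadicSpike_apply (j : ℕ) (w : ℕ → ℝ) {x : ℝ} (hx : x ∈ Ioc (0 : ℝ) 1) :
    (∑ k ∈ Finset.Icc 1 (2 ^ j), w k • dyadicSpike j k) x =
      w ⌈x * 2 ^ j⌉₊ * ((j : ℝ) * 2 ^ j) := by
  have hmem := ceil_mul_two_pow_mem_Icc j hx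
  rw [Finset.sum_apply, Finset.sum_eq_single_of_mem _ hmem]
  · rw [Pi.smul_apply, smul_eq_mul, dyadicSpike,
      indicator_of_mem ((mem_dyadicInterval_iff (Finset.mem_Icc.1 hmem).1).2 rfl)]
  · intro k hk hne
    rw [Pi.smul_apply, smul_eq_mul, dyadicSpike, indicator_of_notMem, mul_zero]
    rw [mem_dyadicInterval_iff (Finset.mem_Icc.1 hk).1]
    exact fun h => hne h.symm

lemma exists_mem_convexHull_dyadicSpike_eqOn {j : ℕ} {a : ℕ → ℝ}
    (ha : ∀ k ∈ Finset.Icc 1 (2 ^ j), 0 ≤ a k ∧ a k ≤ j) :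
    ∃ h ∈ convexHull ℝ (dyadicSpike j '' ↑(Finset.Icc 1 (2 ^ j))),
      ∀ x ∈ Ioc (1 / 2 ^ j : ℝ) 1, h x = a ⌈x * 2 ^ j⌉₊ := by
  set T := Finset.Icc 1 (2 ^ j)
  set rest := 1 - ∑ k ∈ T, a k / (j * 2 ^ j)
  set w : ℕ → ℝ := fun k => a k / (j * 2 ^ j) + if k = 1 then rest else 0
  have h1T : 1 ∈ T := Finset.mem_Icc.2 ⟨le_rfl, Nat.one_le_two_pow⟩
  have hmass : ∑ k ∈ T, a k / (j * 2 ^ j) ≤ 1 := calc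
    _ ≤ ∑ _k ∈ T, (1 : ℝ) / 2 ^ j := by
      refine Finset.sum_le_sum fun k hk => div_le_of_le_mul₀ (by positivity) (by positivity) ?_
      rw [one_div_mul_eq_div, mul_div_cancel_right₀ _ (by positivity)]
      exact (ha k hk).2
    _ = 1 := by simp [T]
  have hrest : 0 ≤ rest := sub_nonneg.2 hmass
  have hw0 : ∀ k ∈ T, 0 ≤ w k := fun k hk =>
    add_nonneg (div_nonneg (ha k hk).1 (by positivity)) (by split_ifs <;> simp [hrest])
  have hw1 : ∑ k ∈ T, w k = 1 := by
    rw [Finset.sum_add_distrib, Finset.sum_ite_eq' T 1, if_pos h1T]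
    ring
  refine ⟨∑ k ∈ T, w k • dyadicSpike j k,
    (convex_convexHull ℝ _).sum_mem hw0 hw1 fun k hk => subset_convexHull ℝ _ ⟨k, hk, rfl⟩,
    fun x hx => ?_⟩
  have hx01 : x ∈ Ioc (0 : ℝ) 1 := ⟨lt_trans (by positivity) hx.1, hx.2⟩
  have hk1 : ⌈x * 2 ^ j⌉₊ ≠ 1 := fun h => by
    have := ((mem_dyadicInterval_iff le_rfl).2 h).2
    rw [Nat.cast_one] at this
    linarith [hx.1]
  have hj : (j : ℝ) ≠ 0 := by
    rintro hj
    norm_num [Nat.cast_eq_zero.1 hj] at hx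
  rw [sum_smul_dyadicSpike_apply j w hx01]
  simp only [w, if_neg hk1, add_zero]
  field_simp

lemma volume_support_le {f : ℕ → ℝ → ℝ}
    (hf : ∀ j k : ℕ, 1 ≤ k → k ≤ 2 ^ j → f (2 ^ j + k - 1) = dyadicSpike j k)
    {n : ℕ} (hn : 1 ≤ n) : volume (Function.support (f n)) ≤ ENNReal.ofReal (2 / n) := by
  set j := Nat.log 2 n
  have hjn : 2 ^ j ≤ n := Nat.pow_log_le_self 2 (by omega)
  have hnj : n < 2 ^ j * 2 := pow_succ 2 j ▸ Nat.lt_pow_succ_log_self (by norm_num) n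
  have hfn : f n = dyadicSpike j (n + 1 - 2 ^ j) := by
    rw [← hf j _ (by omega) (by omega)]
    congr 1
    omega
  rw [hfn, dyadicSpike]
  refine (measure_mono support_indicator_subset).trans ?_
  rw [volume_dyadicInterval]
  apply ENNReal.ofReal_le_ofReal
  rw [div_le_div_iff₀ (by positivity) (by positivity)]
  have : (n : ℝ) < 2 ^ j * 2 := by exact_mod_cast hnj
  linarith

lemma exists_mem_convexHull_tail_dist_lt {f : ℕ → ℝ → ℝ}
    (hf : ∀ j k : ℕ, 1 ≤ k → k ≤ 2 ^ j → f (2 ^ j + k - 1) = dyadicSpike j k)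
    {c : ℝ → ℝ} (hc : Continuous c) (hc0 : 0 ≤ c) (N : ℕ) {δ η : ℝ} (hδ : 0 < δ) (hη : 0 < η) :
    ∃ h ∈ convexHull ℝ {φ | ∃ k, N ≤ k ∧ φ = f k}, ∀ x ∈ Ioc η 1, dist (h x) (c x) < δ := by
  obtain ⟨ρ, hρ, hcρ⟩ := Metric.uniformContinuousOn_iff.1
    ((isCompact_Icc (a := (0 : ℝ)) (b := 1)).uniformContinuousOn_of_continuous hc.continuousOn)
    δ hδ
  obtain ⟨C, hC⟩ := (isCompact_Icc (a := (0 : ℝ)) (b := 1)).exists_bound_of_continuousOn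
    hc.continuousOn
  obtain ⟨j, hjN, hjC, hjmesh⟩ := ((eventually_ge_atTop N).and
    ((tendsto_natCast_atTop_atTop.eventually_ge_atTop C).and
    ((tendsto_pow_atTop_nhds_zero_of_lt_one (r := (1 / 2 : ℝ)) (by norm_num)
      (by norm_num)).eventually (gt_mem_nhds (lt_min hρ hη))))).exists
  rw [one_div_pow, lt_min_iff] at hjmesh
  have hgrid (k : ℕ) (hk : k ∈ Finset.Icc 1 (2 ^ j)) : (k : ℝ) / 2 ^ j ∈ Icc (0 : ℝ) 1 := by
    rw [Finset.mem_Icc] at hk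
    refine ⟨by positivity, div_le_one_of_le₀ (by exact_mod_cast hk.2) (by positivity)⟩
  obtain ⟨h, hh, hha⟩ := exists_mem_convexHull_dyadicSpike_eqOn (j := j)
    (a := fun k => c (k / 2 ^ j)) fun k hk =>
      ⟨hc0 _, (le_abs_self _).trans ((hC _ (hgrid k hk)).trans hjC)⟩
  refine ⟨h, convexHull_mono ?_ hh, fun x hx => ?_⟩
  · rintro _ ⟨k, hk, rfl⟩
    rw [Finset.coe_Icc, mem_Icc] at hk
    exact ⟨2 ^ j + k - 1, by have := j.lt_two_pow_self; omega, (hf j k hk.1 hk.2).symm⟩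
  · have hx01 : x ∈ Ioc (0 : ℝ) 1 := ⟨hη.trans hx.1, hx.2⟩
    have hk := ceil_mul_two_pow_mem_Icc j hx01
    have hxI := (mem_dyadicInterval_iff (Finset.mem_Icc.1 hk).1).2 rfl
    rw [dyadicInterval, mem_Ioc, sub_div] at hxI
    rw [hha x ⟨hjmesh.2.trans hx.1, hx.2⟩]
    refine hcρ _ (hgrid _ hk) x (Ioc_subset_Icc_self hx01) ?_
    rw [Real.dist_eq, abs_lt]
    constructor <;> linarith [hjmesh.1]

lemma exists_mem_convexHull_tail_measure_dist_le {f : ℕ → ℝ → ℝ}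
    (hf : ∀ j k : ℕ, 1 ≤ k → k ≤ 2 ^ j → f (2 ^ j + k - 1) = dyadicSpike j k)
    {g : ℝ → ℝ} (hg : Measurable g) (hg0 : 0 ≤ᵐ[volume.restrict (Ioc (0 : ℝ) 1)] g) (N : ℕ)
    {δ : ℝ} (hδ : 0 < δ) :
    ∃ h ∈ convexHull ℝ {φ | ∃ k, N ≤ k ∧ φ = f k},
      volume.restrict (Ioc (0 : ℝ) 1) {x | δ ≤ dist (h x) (g x)} ≤ ENNReal.ofReal δ := by
  obtain ⟨c, hc, hc0, hcg⟩ := exists_continuous_nonneg_measure_dist_le hg hg0 (half_pos hδ)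
  obtain ⟨h, hh, hhc⟩ :=
    exists_mem_convexHull_tail_dist_lt hf hc hc0 N (half_pos hδ) (half_pos hδ)
  refine ⟨h, hh, measure_le_dist_le_of_halves hδ.le ?_ hcg⟩
  rw [Measure.restrict_apply' measurableSet_Ioc]
  calc _ ≤ volume (Ioc (0 : ℝ) (δ / 2)) := by
        refine measure_mono fun x ⟨(hxδ : δ / 2 ≤ dist (h x) (c x)), hx⟩ => ⟨hx.1, ?_⟩
        exact not_lt.1 fun hlt => (hhc x ⟨hlt, hx.2⟩).not_ge hxδ
    _ = ENNReal.ofReal (δ / 2) := by rw [Real.volume_Ioc, sub_zero]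

theorem stmt11 (f : ℕ → ℝ → ℝ)
    (hf : ∀ m k : ℕ, 1 ≤ m → 1 ≤ k → k ≤ 2 ^ (m - 1) →
      f (2 ^ (m - 1) + k - 1) =
        Set.indicator (Set.Ioc (((k : ℝ) - 1) / 2 ^ (m - 1)) ((k : ℝ) / 2 ^ (m - 1)))
          (fun _ => ((m : ℝ) - 1) * 2 ^ (m - 1))) :
    TendstoInMeasure (volume.restrict (Set.Ioc (0 : ℝ) 1)) f atTop (fun _ => (0 : ℝ)) ∧
    ∀ g : ℝ → ℝ, Measurable g → 0 ≤ᵐ[volume.restrict (Set.Ioc (0 : ℝ) 1)] g →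
      ∃ h : ℕ → ℝ → ℝ, FwdConvexCombos f h ∧
        TendstoInMeasure (volume.restrict (Set.Ioc (0 : ℝ) 1)) h atTop g := by
  have hspike (j k : ℕ) (hk : 1 ≤ k) (hkj : k ≤ 2 ^ j) :
      f (2 ^ j + k - 1) = dyadicSpike j k := by
    simpa [dyadicSpike, dyadicInterval] using hf (j + 1) k (by omega) hk (by simpa using hkj)
  refine ⟨tendstoInMeasure_zero_of_tendsto_measure_support ?_, fun g hg hg0 =>
    exists_fwdConvexCombos_tendstoInMeasure fun N δ hδ =>
      exists_mem_convexHull_tail_measure_dist_le hspike hg hg0 N hδ⟩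
  have hlim : Tendsto (fun n : ℕ => ENNReal.ofReal (2 / n)) atTop (𝓝 0) := by
    simpa using ENNReal.tendsto_ofReal (tendsto_const_div_atTop_nhds_zero_nat 2)
  refine tendsto_of_tendsto_of_tendsto_of_le_of_le' tendsto_const_nhds hlim
    (Eventually.of_forall fun _ => zero_le) ?_
  filter_upwards [eventually_ge_atTop 1] with n hn
  exact (Measure.restrict_apply_le _ _).trans (volume_support_le hspike hn)
end

section
/- Let (Ω, 𝓕, P) be a probability space carrying a sequence (f_n)_{n∈ℕ} of independent random variables with identical distribution P(f_n = 0) = P(f_n = 2) = 1/2. Then every sequence (h_n) of forward convex combinations of (f_n) that converges P-a.e. to a measurable function g : Ω → [0,∞] satisfies g = 1 P-a.e.; moreover there exists a sequence of forward convex combinations of (f_n) converging P-a.e. to the constant 1. In particular, the set of all a.e.-limits of sequences of forward convex combinations of (f_n) is exactly {1}. -/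
open MeasureTheory Filter Set

/-!
A forward convex combination `h n` of the `f k` takes values in `[0, 2]` and has mean `1`; as it
involves only finitely many `f k`, independence gives `∫ h m * h n = 1` for all large `m`. If
`h n → g` a.e., dominated convergence turns these into `∫ g = 1` and `∫ g * g = 1`, so `g` has
variance `0` and `g = 1` a.e.  For existence, the block averages of `f (n + 1), …, f (2n + 1)`
equal `2 S (2n + 2) / (2n + 2) - S (n + 1) / (n + 1)` with `S m = ∑ k < m, f k`, and converge
a.e. to `1` by the strong law of large numbers.
-/

open ProbabilityTheory Topology

section ConvexHull

variable {E : Type*} [AddCommGroup E] [Module ℝ E]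

theorem exists_mem_convexHull_image_Iio {f : ℕ → E} {x : E}
    (hx : x ∈ convexHull ℝ (range f)) : ∃ N, x ∈ convexHull ℝ (f '' Iio N) := by
  classical
  rw [convexHull_eq_union_convexHull_finite_subsets] at hx
  obtain ⟨t, ht, hxt⟩ := mem_iUnion₂.1 hx
  obtain ⟨u, -, rfl⟩ := Finset.subset_set_image_iff.1 (image_univ (f := f) ▸ ht)
  obtain ⟨N, hN⟩ := u.exists_nat_subset_range
  refine ⟨N, convexHull_mono ?_ hxt⟩
  rw [Finset.coe_image]
  exact image_mono fun k hk => by simpa using hN hk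

theorem FwdConvexCombos.mem_convexHull_range {Ω : Type*} {f h : ℕ → Ω → ℝ}
    (hfc : FwdConvexCombos f h) (n : ℕ) : h n ∈ convexHull ℝ (range f) :=
  convexHull_mono (by rintro _ ⟨k, -, rfl⟩; exact mem_range_self k) (hfc n)

theorem FwdConvexCombos.mem_convexHull_of_le {Ω : Type*} {f h : ℕ → Ω → ℝ}
    (hfc : FwdConvexCombos f h) {n : ℕ} {S : Set (Ω → ℝ)} (hS : Convex ℝ S)
    (hf : ∀ k, n ≤ k → f k ∈ S) : h n ∈ S :=
  convexHull_min (by rintro _ ⟨k, hk, rfl⟩; exact hf k hk) hS (hfc n)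

end ConvexHull

theorem ENNReal.tendsto_toReal_of_tendsto_ofReal {x : ℕ → ℝ} {y : ENNReal} {C : ℝ}
    (hx : ∀ n, x n ∈ Icc 0 C) (h : Tendsto (fun n => ENNReal.ofReal (x n)) atTop (𝓝 y)) :
    y ≠ ⊤ ∧ Tendsto x atTop (𝓝 y.toReal) := by
  have hy : y ≠ ⊤ :=
    ((le_of_tendsto' h fun n => ENNReal.ofReal_le_ofReal (hx n).2).trans_lt
      ENNReal.ofReal_lt_top).ne
  refine ⟨hy, ((ENNReal.tendsto_toReal hy).comp h).congr fun n => ?_⟩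
  exact ENNReal.toReal_ofReal (hx n).1

section Uniqueness

variable {Ω : Type*} [MeasurableSpace Ω] {P : Measure Ω}

theorem convex_setOf_measurable_ae_mem {C : Set ℝ} (hC : Convex ℝ C) :
    Convex ℝ {g : Ω → ℝ | Measurable g ∧ ∀ᵐ ω ∂P, g ω ∈ C} := by
  rintro x ⟨hx, hxC⟩ y ⟨hy, hyC⟩ a b ha hb hab
  refine ⟨(hx.const_smul a).add (hy.const_smul b), ?_⟩
  filter_upwards [hxC, hyC] with ω hxω hyω
  exact hC hxω hyω ha hb hab

theorem convex_setOf_integral_mul_eq (φ : Ω → ℝ) (c : ℝ) :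
    Convex ℝ {g : Ω → ℝ | Integrable (fun ω => g ω * φ ω) P ∧ ∫ ω, g ω * φ ω ∂P = c} := by
  rintro x ⟨hx, hxc⟩ y ⟨hy, hyc⟩ a b - - hab
  have hmul : (fun ω => (a • x + b • y) ω * φ ω) =
      fun ω => a * (x ω * φ ω) + b * (y ω * φ ω) := by
    ext ω; simp only [Pi.add_apply, Pi.smul_apply, smul_eq_mul]; ring
  refine ⟨hmul ▸ (hx.const_mul a).add (hy.const_mul b), ?_⟩
  rw [hmul, integral_add (hx.const_mul a) (hy.const_mul b), integral_const_mul,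
    integral_const_mul, hxc, hyc, ← add_mul, hab, one_mul]

theorem norm_le_of_mem_Icc_zero {x C : ℝ} (hx : x ∈ Icc 0 C) : ‖x‖ ≤ C :=
  (Real.norm_of_nonneg hx.1).trans_le hx.2

theorem integrable_of_ae_mem_Icc [IsFiniteMeasure P] {u : Ω → ℝ} {C : ℝ}
    (hu : AEStronglyMeasurable u P) (huC : ∀ᵐ ω ∂P, u ω ∈ Icc 0 C) : Integrable u P :=
  Integrable.of_bound hu C (huC.mono fun _ => norm_le_of_mem_Icc_zero)

theorem ae_norm_mul_le_of_ae_mem_Icc {u v : Ω → ℝ} {C : ℝ} (huC : ∀ᵐ ω ∂P, u ω ∈ Icc 0 C)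
    (hvC : ∀ᵐ ω ∂P, v ω ∈ Icc 0 C) : ∀ᵐ ω ∂P, ‖u ω * v ω‖ ≤ C * C := by
  filter_upwards [huC, hvC] with ω huω hvω
  exact norm_mul_le_of_le (norm_le_of_mem_Icc_zero huω) (norm_le_of_mem_Icc_zero hvω)

theorem integrable_mul_of_ae_mem_Icc [IsFiniteMeasure P] {u v : Ω → ℝ} {C : ℝ}
    (hu : AEStronglyMeasurable u P) (hv : AEStronglyMeasurable v P)
    (huC : ∀ᵐ ω ∂P, u ω ∈ Icc 0 C) (hvC : ∀ᵐ ω ∂P, v ω ∈ Icc 0 C) :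
    Integrable (fun ω => u ω * v ω) P :=
  Integrable.of_bound (hu.mul hv) (C * C) (ae_norm_mul_le_of_ae_mem_Icc huC hvC)

theorem integral_eq_of_tendsto_of_norm_le [IsFiniteMeasure P] {F : ℕ → Ω → ℝ} {G : Ω → ℝ}
    {B c : ℝ} (hF : ∀ n, AEStronglyMeasurable (F n) P) (hB : ∀ n, ∀ᵐ ω ∂P, ‖F n ω‖ ≤ B)
    (hlim : ∀ᵐ ω ∂P, Tendsto (fun n => F n ω) atTop (𝓝 (G ω)))
    (hc : ∀ᶠ n in atTop, ∫ ω, F n ω ∂P = c) : ∫ ω, G ω ∂P = c :=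
  tendsto_nhds_unique
    (tendsto_integral_of_dominated_convergence (fun _ => B) hF (integrable_const B) hB hlim)
    (tendsto_const_nhds.congr' (hc.mono fun _ h => h.symm))

theorem ae_eq_const_of_integral_sq_eq [IsProbabilityMeasure P] {g : Ω → ℝ} {C c : ℝ}
    (hgm : AEStronglyMeasurable g P) (hgC : ∀ᵐ ω ∂P, g ω ∈ Icc 0 C)
    (hmean : ∫ ω, g ω ∂P = c) (hsq : ∫ ω, g ω * g ω ∂P = c ^ 2) : g =ᵐ[P] fun _ => c := by
  have hL2 : MemLp g 2 P := memLp_of_bounded hgC hgm 2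
  have hvar : variance g P = 0 := by
    rw [variance_eq_sub hL2]
    simp only [Pi.pow_apply, pow_two] at hsq ⊢
    rw [hsq, hmean, sub_self]
  have := ae_eq_integral_of_variance_eq_zero hL2 hvar
  rwa [hmean] at this

variable {f h : ℕ → Ω → ℝ} {C c : ℝ}

theorem FwdConvexCombos.measurable_ae_mem_Icc (hfc : FwdConvexCombos f h)
    (hmeas : ∀ n, Measurable (f n)) (hbound : ∀ n, ∀ᵐ ω ∂P, f n ω ∈ Icc 0 C) (n : ℕ) :
    Measurable (h n) ∧ ∀ᵐ ω ∂P, h n ω ∈ Icc 0 C :=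
  hfc.mem_convexHull_of_le (convex_setOf_measurable_ae_mem (convex_Icc 0 C))
    fun k _ => ⟨hmeas k, hbound k⟩

theorem FwdConvexCombos.integral_eq [IsFiniteMeasure P] (hfc : FwdConvexCombos f h)
    (hmeas : ∀ n, Measurable (f n)) (hbound : ∀ n, ∀ᵐ ω ∂P, f n ω ∈ Icc 0 C)
    (hmean : ∀ n, ∫ ω, f n ω ∂P = c) (n : ℕ) : ∫ ω, h n ω ∂P = c := by
  have key := hfc.mem_convexHull_of_le (n := n) (convex_setOf_integral_mul_eq (P := P) 1 c)
    fun k _ => ⟨by simpa using integrable_of_ae_mem_Icc (hmeas k).aestronglyMeasurable (hbound k),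
      by simpa using hmean k⟩
  simpa only [Pi.one_apply, mul_one] using key.2

theorem FwdConvexCombos.eventually_integral_mul_eq [IsFiniteMeasure P] (hfc : FwdConvexCombos f h)
    (hmeas : ∀ n, Measurable (f n)) (hbound : ∀ n, ∀ᵐ ω ∂P, f n ω ∈ Icc 0 C)
    (hcross : ∀ j k, j ≠ k → ∫ ω, f j ω * f k ω ∂P = c ^ 2) (n : ℕ) :
    ∀ᶠ m in atTop, ∫ ω, h m ω * h n ω ∂P = c ^ 2 := by
  have hh := hfc.measurable_ae_mem_Icc hmeas hbound
  have hf : ∀ k, AEStronglyMeasurable (f k) P := fun k => (hmeas k).aestronglyMeasurable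
  obtain ⟨N, hN⟩ := exists_mem_convexHull_image_Iio (hfc.mem_convexHull_range n)
  have hhf : ∀ k, N ≤ k → ∫ ω, f k ω * h n ω ∂P = c ^ 2 := fun k hk => by
    have := convexHull_min ?_ (convex_setOf_integral_mul_eq (P := P) (f k) (c ^ 2)) hN
    · simpa only [mul_comm] using this.2
    rintro _ ⟨l, hl, rfl⟩
    exact ⟨integrable_mul_of_ae_mem_Icc (hf l) (hf k) (hbound l) (hbound k),
      hcross l k ((mem_Iio.1 hl).trans_le hk).ne⟩
  filter_upwards [eventually_ge_atTop N] with m hm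
  refine (hfc.mem_convexHull_of_le (convex_setOf_integral_mul_eq (h n) (c ^ 2))
    fun k hk => ⟨?_, hhf k (hm.trans hk)⟩).2
  exact integrable_mul_of_ae_mem_Icc (hf k) (hh n).1.aestronglyMeasurable (hbound k) (hh n).2

theorem FwdConvexCombos.ae_eq_const_of_tendsto [IsProbabilityMeasure P]
    (hfc : FwdConvexCombos f h) (hmeas : ∀ n, Measurable (f n))
    (hbound : ∀ n, ∀ᵐ ω ∂P, f n ω ∈ Icc 0 C) (hmean : ∀ n, ∫ ω, f n ω ∂P = c)
    (hcross : ∀ j k, j ≠ k → ∫ ω, f j ω * f k ω ∂P = c ^ 2) {g : Ω → ℝ}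
    (hlim : ∀ᵐ ω ∂P, Tendsto (fun n => h n ω) atTop (𝓝 (g ω))) : g =ᵐ[P] fun _ => c := by
  have hh := hfc.measurable_ae_mem_Icc hmeas hbound
  have hgC : ∀ᵐ ω ∂P, g ω ∈ Icc 0 C := by
    filter_upwards [hlim, ae_all_iff.2 fun n => (hh n).2] with ω hω hωC
    exact isClosed_Icc.mem_of_tendsto hω (Eventually.of_forall hωC)
  have hgm : AEStronglyMeasurable g P :=
    aestronglyMeasurable_of_tendsto_ae atTop (fun n => (hh n).1.aestronglyMeasurable) hlim
  have hgh : ∀ n, ∫ ω, g ω * h n ω ∂P = c ^ 2 := fun n =>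
    integral_eq_of_tendsto_of_norm_le (F := fun m ω => h m ω * h n ω)
      (fun m => ((hh m).1.mul (hh n).1).aestronglyMeasurable)
      (fun m => ae_norm_mul_le_of_ae_mem_Icc (hh m).2 (hh n).2)
      (by filter_upwards [hlim] with ω hω using hω.mul_const _)
      (hfc.eventually_integral_mul_eq hmeas hbound hcross n)
  have hgg : ∫ ω, g ω * g ω ∂P = c ^ 2 :=
    integral_eq_of_tendsto_of_norm_le (F := fun n ω => g ω * h n ω)
      (fun n => hgm.mul (hh n).1.aestronglyMeasurable)
      (fun n => ae_norm_mul_le_of_ae_mem_Icc hgC (hh n).2)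
      (by filter_upwards [hlim] with ω hω using hω.const_mul _) (Eventually.of_forall hgh)
  have hg : ∫ ω, g ω ∂P = c :=
    integral_eq_of_tendsto_of_norm_le (fun n => (hh n).1.aestronglyMeasurable)
      (fun n => (hh n).2.mono fun _ => norm_le_of_mem_Icc_zero) hlim
      (Eventually.of_forall (hfc.integral_eq hmeas hbound hmean))
  exact ae_eq_const_of_integral_sq_eq hgm hgC hg hgg

theorem FwdConvexCombos.ae_eq_ofReal_of_tendsto_ofReal [IsProbabilityMeasure P]
    (hfc : FwdConvexCombos f h) (hmeas : ∀ n, Measurable (f n))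
    (hbound : ∀ n, ∀ᵐ ω ∂P, f n ω ∈ Icc 0 C) (hmean : ∀ n, ∫ ω, f n ω ∂P = c)
    (hcross : ∀ j k, j ≠ k → ∫ ω, f j ω * f k ω ∂P = c ^ 2) {g : Ω → ENNReal}
    (hlim : ∀ᵐ ω ∂P, Tendsto (fun n => ENNReal.ofReal (h n ω)) atTop (𝓝 (g ω))) :
    g =ᵐ[P] fun _ => ENNReal.ofReal c := by
  have hreal : ∀ᵐ ω ∂P, g ω ≠ ⊤ ∧ Tendsto (fun n => h n ω) atTop (𝓝 (g ω).toReal) := by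
    filter_upwards [hlim, ae_all_iff.2 fun n => (hfc.measurable_ae_mem_Icc hmeas hbound n).2]
      with ω hω hωC
    exact ENNReal.tendsto_toReal_of_tendsto_ofReal hωC hω
  filter_upwards [hreal, hfc.ae_eq_const_of_tendsto hmeas hbound hmean hcross
    (hreal.mono fun _ => And.right)] with ω hω hωc
  rw [← hωc, ENNReal.ofReal_toReal hω.1]

end Uniqueness

section Existence

theorem tendsto_mul_sum_Ico_of_tendsto_mul_sum_range {x : ℕ → ℝ} {L : ℝ}
    (hx : Tendsto (fun n : ℕ => (n : ℝ)⁻¹ * ∑ i ∈ Finset.range n, x i) atTop (𝓝 L)) :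
    Tendsto (fun n : ℕ => ((n : ℝ) + 1)⁻¹ * ∑ i ∈ Finset.Ico (n + 1) (2 * (n + 1)), x i)
      atTop (𝓝 L) := by
  have hlim := ((hx.comp (tendsto_atTop_mono (fun n => by dsimp; omega) tendsto_id :
    Tendsto (fun n => 2 * (n + 1)) atTop atTop)).const_mul 2).sub
    (hx.comp (tendsto_add_atTop_nat 1))
  rw [two_mul, add_sub_cancel_right] at hlim
  refine hlim.congr fun n => ?_
  rw [Function.comp_apply, Function.comp_apply, Finset.sum_Ico_eq_sub _ (by omega)]
  push_cast
  field_simp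

variable {Ω : Type*} [MeasurableSpace Ω] {P : Measure Ω}

theorem exists_fwdConvexCombos_tendsto_integral {f : ℕ → Ω → ℝ} (hint : Integrable (f 0) P)
    (hindep : Pairwise fun i j => f i ⟂ᵢ[P] f j) (hident : ∀ i, IdentDistrib (f i) (f 0) P P) :
    ∃ h, FwdConvexCombos f h ∧
      ∀ᵐ ω ∂P, Tendsto (fun n => h n ω) atTop (𝓝 (∫ ω, f 0 ω ∂P)) := by
  set block : ℕ → Finset ℕ := fun n => Finset.Ico (n + 1) (2 * (n + 1))
  have hcard : ∀ n, (block n).card = n + 1 := fun n => by simp only [block, Nat.card_Ico]; omega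
  refine ⟨fun n => (block n).centerMass (fun _ => (1 : ℝ)) f, fun n => ?_, ?_⟩
  · have hpos : (0 : ℝ) < ∑ _ ∈ block n, 1 := by
      simp only [Finset.sum_const, hcard, nsmul_eq_mul, Nat.cast_add, Nat.cast_one, mul_one]
      positivity
    refine (block n).centerMass_mem_convexHull (fun _ _ => zero_le_one) hpos fun k hk => ?_
    exact ⟨k, (Finset.mem_Ico.1 hk).1.trans' n.le_succ, rfl⟩
  · filter_upwards [strong_law_ae f hint hindep hident] with ω hω
    refine (tendsto_mul_sum_Ico_of_tendsto_mul_sum_range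
      (by simpa only [smul_eq_mul] using hω)).congr fun n => ?_
    simp [Finset.centerMass, hcard, block]

end Existence

section Distribution

variable {Ω : Type*} [MeasurableSpace Ω] {P : Measure Ω}

theorem measure_preimage_eq_sum_of_ae_mem {β : Type*} [MeasurableSpace β]
    [MeasurableSingletonClass β] {X : Ω → β} {s : Finset β} (hX : Measurable X)
    (hXs : ∀ᵐ ω ∂P, X ω ∈ s) (A : Set β) [DecidablePred (· ∈ A)] :
    P (X ⁻¹' A) = ∑ a ∈ s with a ∈ A, P (X ⁻¹' {a}) := by
  rw [sum_measure_preimage_singleton _ fun a _ => hX (measurableSet_singleton a)]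
  refine measure_congr ?_
  filter_upwards [hXs] with ω hω
  exact propext ⟨fun h => Finset.mem_filter.2 ⟨hω, h⟩, fun h => (Finset.mem_filter.1 h).2⟩

theorem ProbabilityTheory.IdentDistrib.of_ae_mem_finset {β : Type*} [MeasurableSpace β]
    [MeasurableSingletonClass β] {X Y : Ω → β} {s : Finset β} (hX : Measurable X)
    (hY : Measurable Y) (hXs : ∀ᵐ ω ∂P, X ω ∈ s) (hYs : ∀ᵐ ω ∂P, Y ω ∈ s)
    (hXY : ∀ a ∈ s, P (X ⁻¹' {a}) = P (Y ⁻¹' {a})) : IdentDistrib X Y P P := by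
  classical
  refine ⟨hX.aemeasurable, hY.aemeasurable, Measure.ext fun A hA => ?_⟩
  rw [Measure.map_apply hX hA, Measure.map_apply hY hA, measure_preimage_eq_sum_of_ae_mem hX hXs,
    measure_preimage_eq_sum_of_ae_mem hY hYs]
  exact Finset.sum_congr rfl fun a ha => hXY a (Finset.mem_filter.1 ha).1

variable [IsProbabilityMeasure P] {X : Ω → ℝ}

theorem ae_eq_zero_or_eq_two (hX : Measurable X) (h0 : P {ω | X ω = 0} = 1 / 2)
    (h2 : P {ω | X ω = 2} = 1 / 2) : ∀ᵐ ω ∂P, X ω = 0 ∨ X ω = 2 := by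
  have hX0 := hX (measurableSet_singleton 0)
  have hX2 := hX (measurableSet_singleton 2)
  have hdisj : Disjoint {ω | X ω = 0} {ω | X ω = 2} :=
    disjoint_left.2 fun ω (h0 : X ω = 0) (h2 : X ω = 2) => by norm_num [h0] at h2
  rw [ae_iff_measure_eq ?_, ofPred_or, measure_union hdisj hX2, h0, h2, measure_univ,
    ENNReal.add_halves]
  exact (hX0.union hX2).nullMeasurableSet

theorem identDistrib_of_measure_eq_half {Y : Ω → ℝ} (hX : Measurable X) (hY : Measurable Y)
    (hX0 : P {ω | X ω = 0} = 1 / 2) (hX2 : P {ω | X ω = 2} = 1 / 2)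
    (hY0 : P {ω | Y ω = 0} = 1 / 2) (hY2 : P {ω | Y ω = 2} = 1 / 2) : IdentDistrib X Y P P := by
  refine .of_ae_mem_finset (s := {0, 2}) hX hY (by simpa using ae_eq_zero_or_eq_two hX hX0 hX2)
    (by simpa using ae_eq_zero_or_eq_two hY hY0 hY2) ?_
  simp only [Finset.mem_insert, Finset.mem_singleton, forall_eq_or_imp, forall_eq]
  exact ⟨hX0.trans hY0.symm, hX2.trans hY2.symm⟩

theorem integral_eq_one_of_measure_eq_half (hX : Measurable X) (h0 : P {ω | X ω = 0} = 1 / 2)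
    (h2 : P {ω | X ω = 2} = 1 / 2) : ∫ ω, X ω ∂P = 1 := by
  have hind : X =ᵐ[P] (X ⁻¹' {2}).indicator fun _ => 2 := by
    filter_upwards [ae_eq_zero_or_eq_two hX h0 h2] with ω hω
    rcases hω with hω | hω <;> simp [hω]
  rw [integral_congr_ae hind, integral_indicator_const _ (hX (measurableSet_singleton 2)),
    measureReal_def, show P (X ⁻¹' {2}) = 1 / 2 from h2]
  norm_num

end Distribution

theorem stmt12 {Ω : Type*} [MeasurableSpace Ω] (P : Measure Ω)
    [IsProbabilityMeasure P]
    (f : ℕ → Ω → ℝ)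
    (hfmeas : ∀ n, Measurable (f n))
    (hindep : ProbabilityTheory.iIndepFun f P)
    (hdist : ∀ n, P {ω | f n ω = 0} = 1 / 2 ∧ P {ω | f n ω = 2} = 1 / 2) :
    (∀ (h : ℕ → Ω → ℝ) (g : Ω → ENNReal), FwdConvexCombos f h → Measurable g →
      (∀ᵐ ω ∂P, Tendsto (fun n => ENNReal.ofReal (h n ω)) atTop (nhds (g ω))) →
      g =ᵐ[P] fun _ => (1 : ENNReal)) ∧
    (∃ h : ℕ → Ω → ℝ, FwdConvexCombos f h ∧
      ∀ᵐ ω ∂P, Tendsto (fun n => h n ω) atTop (nhds (1 : ℝ))) := by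
  have hbound n : ∀ᵐ ω ∂P, f n ω ∈ Icc (0 : ℝ) 2 :=
    (ae_eq_zero_or_eq_two (hfmeas n) (hdist n).1 (hdist n).2).mono fun ω hω => by
      rcases hω with hω | hω <;> norm_num [hω]
  have hmean n : ∫ ω, f n ω ∂P = 1 :=
    integral_eq_one_of_measure_eq_half (hfmeas n) (hdist n).1 (hdist n).2
  have hpair : Pairwise fun i j => f i ⟂ᵢ[P] f j := fun i j hij => hindep.indepFun hij
  refine ⟨fun h g hfc _ hlim => ?_, ?_⟩
  · have hcross j k (hjk : j ≠ k) : ∫ ω, f j ω * f k ω ∂P = 1 ^ 2 := by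
      rw [← Pi.mul_def, (hpair hjk).integral_mul_eq_mul_integral (hfmeas j).aestronglyMeasurable
        (hfmeas k).aestronglyMeasurable, hmean, hmean, one_pow, one_mul]
    simpa using hfc.ae_eq_ofReal_of_tendsto_ofReal hfmeas hbound hmean hcross hlim
  · have hident i : IdentDistrib (f i) (f 0) P P := identDistrib_of_measure_eq_half (hfmeas i)
      (hfmeas 0) (hdist i).1 (hdist i).2 (hdist 0).1 (hdist 0).2
    simpa [hmean 0] using exists_fwdConvexCombos_tendsto_integral
      (integrable_of_ae_mem_Icc (hfmeas 0).aestronglyMeasurable (hbound 0)) hpair hident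
end

section
/- Let (Ω, 𝓕, P) be a probability space and (f_n)_{n∈ℕ} a sequence of nonnegative a.e.-finite measurable functions. Suppose that every sequence (h_n) of forward convex combinations of (f_n) that converges P-a.e. to a measurable function g : Ω → [0,∞] satisfies g < ∞ P-a.e. Then the convex hull of {f_n : n ∈ ℕ} is bounded in probability. -/
/-!
If the hull were not bounded in probability, then for some `η > 0` every tail hull
`conv {f k | k ≥ N}` would contain functions exceeding any level `ℓ` with probability at least
`η`: the finitely many `f 0, …, f N` are a.s. finite. Now minimize `h ↦ 𝔼[exp (-h)]`
approximately over the decreasing tail hulls. At the midpoint of two near-minimizers `H n`,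
`H m` this functional is still at least the infimum, and its uniform convexity on `[0, 1]` then
makes `exp (-H n)` Cauchy in `L²`; it converges a.e. and in `L¹` to some `G`, and `H n → -log G`
in `[0, ∞]`. By hypothesis this limit is finite a.e., so `G > 0` and `∫_A G` is bounded below
on sets `A` of measure `≥ η`. Mixing `H j` with a small multiple `t` of a tail function that
exceeds `1 / t` on such a set then lowers `𝔼[exp (-H j)]` by a definite amount, contradicting
near-minimality.
-/

open MeasureTheory Filter Set

open scoped ENNReal Topology
open Real

lemma exp_neg_convexComb_le {t h b : ℝ} (ht0 : 0 ≤ t) (ht1 : t ≤ 1) (hb : 0 ≤ b) :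
    exp (-((1 - t) * h + t * b)) ≤ t + exp (-h) * exp (-(t * b)) := by
  have hconv : exp ((1 - t) * -h + t * 0) ≤ (1 - t) * exp (-h) + t * exp 0 :=
    convexOn_exp.2 (mem_univ _) (mem_univ _) (sub_nonneg.2 ht1) ht0 (by ring)
  have hb' : exp (-(t * b)) ≤ 1 := exp_le_one_iff.2 (by nlinarith)
  have hsplit : exp (-((1 - t) * h + t * b)) = exp ((1 - t) * -h + t * 0) * exp (-(t * b)) := by
    rw [← exp_add]; ring_nf
  rw [exp_zero, mul_one] at hconv
  rw [hsplit]
  nlinarith [mul_le_mul_of_nonneg_right hconv (exp_pos (-(t * b))).le, exp_pos (-h),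
    mul_le_mul_of_nonneg_left hb' ht0, mul_nonneg (mul_nonneg ht0 (exp_pos (-h)).le)
      (exp_pos (-(t * b))).le]

lemma sq_exp_neg_sub_exp_neg_le {x y : ℝ} (hx : 0 ≤ x) (hy : 0 ≤ y) :
    (exp (-x) - exp (-y)) ^ 2 ≤
      8 * ((exp (-x) + exp (-y)) / 2 - exp (-(2⁻¹ * x + 2⁻¹ * y))) := by
  set u := exp (-(2⁻¹ * x))
  set w := exp (-(2⁻¹ * y))
  have hu : exp (-x) = u ^ 2 := by rw [sq, ← exp_add]; ring_nf
  have hw : exp (-y) = w ^ 2 := by rw [sq, ← exp_add]; ring_nf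
  have huw : exp (-(2⁻¹ * x + 2⁻¹ * y)) = u * w := by rw [← exp_add]; ring_nf
  have hu1 : u ≤ 1 := exp_le_one_iff.2 (by linarith)
  have hw1 : w ≤ 1 := exp_le_one_iff.2 (by linarith)
  have hsum : (u + w) ^ 2 ≤ 2 ^ 2 := pow_le_pow_left₀ (by positivity) (by linarith) 2
  rw [hu, hw, huw]
  nlinarith [mul_le_mul_of_nonneg_left hsum (sq_nonneg (u - w))]

lemma abs_exp_neg_le_one {x : ℝ} (hx : 0 ≤ x) : |exp (-x)| ≤ 1 := by
  rw [abs_of_pos (exp_pos _)]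
  exact exp_le_one_iff.2 (neg_nonpos.2 hx)

lemma exists_tendsto_ofReal_of_tendsto_exp_neg {h : ℕ → ℝ} {L : ℝ}
    (hL : Tendsto (fun n => exp (-h n)) atTop (𝓝 L)) :
    ∃ l : ℝ≥0∞, Tendsto (fun n => ENNReal.ofReal (h n)) atTop (𝓝 l) := by
  rcases (ge_of_tendsto' hL fun n => (exp_pos _).le).eq_or_lt with hL0 | hL0
  · refine ⟨∞, ENNReal.tendsto_ofReal_atTop.comp ?_⟩
    rw [← hL0] at hL
    exact tendsto_neg_atBot_iff.1 (tendsto_exp_comp_nhds_zero.1 hL)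
  · refine ⟨ENNReal.ofReal (-log L), (ENNReal.continuous_ofReal.tendsto _).comp ?_⟩
    simpa [Function.comp_def] using ((continuousAt_log hL0.ne').tendsto.comp hL).neg

lemma tendsto_exp_neg_of_tendsto_ofReal {h : ℕ → ℝ} (h0 : ∀ n, 0 ≤ h n) {l : ℝ≥0∞} (hl : l ≠ ∞)
    (hlim : Tendsto (fun n => ENNReal.ofReal (h n)) atTop (𝓝 l)) :
    Tendsto (fun n => exp (-h n)) atTop (𝓝 (exp (-l.toReal))) := by
  have hh : Tendsto h atTop (𝓝 l.toReal) :=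
    ((ENNReal.tendsto_toReal hl).comp hlim).congr fun n => ENNReal.toReal_ofReal (h0 n)
  exact (continuous_exp.tendsto _).comp hh.neg

def IsApproxMinimizing {α : Type*} (C : ℕ → Set α) (V : α → ℝ) (s : ℝ) (ε : ℕ → ℝ)
    (φ : ℕ → ℕ) (x : ℕ → α) : Prop :=
  ∀ n, x n ∈ C (φ n) ∧ V (x n) ≤ s + ε n ∧ ∀ y ∈ C (φ n), s - ε n ≤ V y

lemma exists_isApproxMinimizing {α : Type*} {C : ℕ → Set α} (hC : Antitone C)
    (hne : ∀ n, (C n).Nonempty) {V : α → ℝ} (hbelow : BddBelow (V '' C 0))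
    (habove : BddAbove (V '' C 0)) {ε : ℕ → ℝ} (hε : ∀ n, 0 < ε n) :
    ∃ s φ x, StrictMono φ ∧ IsApproxMinimizing C V s ε φ x := by
  set m : ℕ → ℝ := fun n => sInf (V '' C n)
  have hbdd : ∀ n, BddBelow (V '' C n) := fun n => hbelow.mono (image_mono (hC n.zero_le))
  have hm : Monotone m := fun n k hnk =>
    csInf_le_csInf (hbdd n) ((hne k).image V) (image_mono (hC hnk))
  obtain ⟨M, hM⟩ := habove
  have hmbdd : BddAbove (range m) := by
    refine ⟨M, ?_⟩
    rintro _ ⟨n, rfl⟩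
    obtain ⟨y, hy⟩ := hne n
    exact (csInf_le (hbdd n) (mem_image_of_mem V hy)).trans
      (hM (mem_image_of_mem V (hC n.zero_le hy)))
  have hlim := tendsto_atTop_ciSup hm hmbdd
  obtain ⟨φ, hφ, hφs⟩ := extraction_forall_of_eventually fun n =>
    hlim.eventually (lt_mem_nhds (sub_lt_self (⨆ n, m n) (hε n)))
  have hx : ∀ n, ∃ x ∈ C (φ n), V x < m (φ n) + ε n := fun n => by
    obtain ⟨_, ⟨x, hx, rfl⟩, hlt⟩ :=
      exists_lt_of_csInf_lt ((hne (φ n)).image V) (lt_add_of_pos_right (m (φ n)) (hε n))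
    exact ⟨x, hx, hlt⟩
  choose x hxC hxV using hx
  refine ⟨⨆ n, m n, φ, x, hφ, fun n => ⟨hxC n, ?_, fun y hy => ?_⟩⟩
  · linarith [hxV n, le_ciSup hmbdd (φ n)]
  · exact (hφs n).le.trans (csInf_le (hbdd _) (mem_image_of_mem V hy))

section TailHull

variable {E : Type*} [AddCommGroup E] [Module ℝ E]

def tailHull (f : ℕ → E) (n : ℕ) : Set E :=
  convexHull ℝ {g | ∃ k, n ≤ k ∧ g = f k}

lemma self_mem_tailHull (f : ℕ → E) (n : ℕ) : f n ∈ tailHull f n :=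
  subset_convexHull ℝ _ ⟨n, le_rfl, rfl⟩

lemma tailHull_antitone (f : ℕ → E) : Antitone (tailHull f) := fun _ _ hnm =>
  convexHull_mono fun _ ⟨k, hk, hg⟩ => ⟨k, hnm.trans hk, hg⟩

lemma convex_tailHull (f : ℕ → E) (n : ℕ) : Convex ℝ (tailHull f n) :=
  convex_convexHull ℝ _

lemma convexHull_range_eq_convexJoin (f : ℕ → E) (N : ℕ) :
    convexHull ℝ (range f) =
      convexJoin ℝ (convexHull ℝ (f '' ↑(Finset.Iic N))) (tailHull f (N + 1)) := by
  have hsplit : range f = f '' ↑(Finset.Iic N) ∪ {g | ∃ k, N + 1 ≤ k ∧ g = f k} := by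
    ext g
    constructor
    · rintro ⟨k, rfl⟩
      rcases le_or_gt k N with hk | hk
      · exact Or.inl ⟨k, by simpa using hk, rfl⟩
      · exact Or.inr ⟨k, hk, rfl⟩
    · rintro (⟨k, -, rfl⟩ | ⟨k, -, rfl⟩) <;> exact ⟨k, rfl⟩
  have hhead : (f '' ↑(Finset.Iic N)).Nonempty := ⟨f 0, mem_image_of_mem f (by simp)⟩
  have htail : {g | ∃ k, N + 1 ≤ k ∧ g = f k}.Nonempty := ⟨f (N + 1), N + 1, le_rfl, rfl⟩
  rw [hsplit, convexHull_union hhead htail]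
  rfl

end TailHull

lemma le_sum_abs_of_mem_convexHull_image {ι Ω : Type*} (f : ι → Ω → ℝ) (s : Finset ι)
    {c : Ω → ℝ} (hc : c ∈ convexHull ℝ (f '' s)) (ω : Ω) : c ω ≤ ∑ k ∈ s, |f k ω| := by
  refine convexHull_min ?_ (convex_halfSpace_le (LinearMap.proj ω).isLinear _) hc
  rintro _ ⟨k, hk, rfl⟩
  exact (le_abs_self _).trans (Finset.single_le_sum (fun i _ => abs_nonneg (f i ω)) hk)

section Measure

variable {Ω : Type*} [MeasurableSpace Ω] {P : Measure Ω}

lemma tendsto_measure_lt_atTop [IsFiniteMeasure P] {M : Ω → ℝ} (hM : Measurable M) :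
    Tendsto (fun ℓ : ℝ => P {ω | ℓ < M ω}) atTop (𝓝 0) := by
  have h := tendsto_measure_iInter_atTop (μ := P) (s := fun ℓ : ℝ => {ω | ℓ < M ω})
    (fun _ => (measurableSet_lt measurable_const hM).nullMeasurableSet)
    (fun _ _ hℓ _ hω => hℓ.trans_lt hω) ⟨0, measure_ne_top P _⟩
  have hempty : ⋂ ℓ : ℝ, {ω | ℓ < M ω} = ∅ :=
    eq_empty_of_forall_notMem fun ω hω => lt_irrefl (M ω) (mem_iInter.1 hω (M ω))
  rwa [hempty, measure_empty] at h

lemma exists_le_measure_of_not_bddInProbability [IsFiniteMeasure P] {B : Set (Ω → ℝ)}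
    (hB : ¬ BddInProbability P B) :
    ∃ ε : ℝ≥0∞, ε ≠ 0 ∧ ε ≠ ∞ ∧ ∀ ℓ : ℝ, ∃ b ∈ B, ε ≤ P {ω | ℓ < b ω} := by
  set S : ℝ → ℝ≥0∞ := fun ℓ => ⨆ b ∈ B, P {ω | ℓ < b ω}
  have hS : Antitone S := fun _ _ hℓ =>
    iSup₂_mono fun _ _ => measure_mono fun _ hω => hℓ.trans_lt hω
  have hinf : ⨅ ℓ, S ℓ ≠ 0 := fun h0 => hB <| by
    have := tendsto_atTop_iInf hS
    rw [h0] at this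
    exact this
  have hfin : ⨅ ℓ, S ℓ ≠ ∞ := ne_top_of_le_ne_top (measure_ne_top P univ)
    ((iInf_le S 0).trans (iSup₂_le fun _ _ => measure_mono (subset_univ _)))
  refine ⟨(⨅ ℓ, S ℓ) / 2, (ENNReal.half_pos hinf).ne', ENNReal.div_ne_top hfin two_ne_zero,
    fun ℓ => ?_⟩
  have hlt := (ENNReal.half_lt_self hinf hfin).trans_le (iInf_le S ℓ)
  simp only [S, lt_iSup_iff] at hlt
  obtain ⟨b, hb, hbℓ⟩ := hlt
  exact ⟨b, hb, hbℓ.le⟩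

lemma integral_abs_le_of_integral_sq_le [IsProbabilityMeasure P] {X : Ω → ℝ} (hX : MemLp X 2 P)
    {c : ℝ} (hc : 0 < c) (h : ∫ ω, X ω ^ 2 ∂P ≤ c ^ 2) : ∫ ω, |X ω| ∂P ≤ c := by
  have hpt : ∀ ω, |X ω| ≤ (X ω ^ 2 + c ^ 2) / (2 * c) := fun ω => by
    rw [le_div_iff₀ (by positivity)]
    nlinarith [sq_nonneg (|X ω| - c), sq_abs (X ω)]
  calc ∫ ω, |X ω| ∂P ≤ ∫ ω, (X ω ^ 2 + c ^ 2) / (2 * c) ∂P :=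
        integral_mono (hX.integrable one_le_two).abs
          ((hX.integrable_sq.add (integrable_const _)).div_const _) hpt
    _ = (∫ ω, X ω ^ 2 ∂P + c ^ 2) / (2 * c) := by
        rw [integral_div, integral_add hX.integrable_sq (integrable_const _)]
        simp
    _ ≤ (c ^ 2 + c ^ 2) / (2 * c) := by gcongr
    _ = c := by field_simp; ring

lemma ae_exists_tendsto_of_integral_sq_sub_le_s13 [IsProbabilityMeasure P] {F : ℕ → Ω → ℝ}
    (hF : ∀ n, MemLp (F n) 2 P) {c : ℝ} (hc : 0 < c)
    (hcau : ∀ N n m, N ≤ n → N ≤ m → ∫ ω, (F n ω - F m ω) ^ 2 ∂P ≤ (c * 2⁻¹ ^ N) ^ 2) :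
    ∀ᵐ ω ∂P, ∃ L, Tendsto (fun n => F n ω) atTop (𝓝 L) := by
  have hsum : Summable fun N : ℕ => 2 * c * (2⁻¹ : ℝ) ^ N :=
    (summable_geometric_of_lt_one (by norm_num) (by norm_num)).mul_left _
  refine Lp.ae_tendsto_of_cauchy_eLpNorm (p := 1) (fun n => (hF n).aestronglyMeasurable) le_rfl
    (B := fun N => ENNReal.ofReal (2 * c * 2⁻¹ ^ N)) ?_ fun N n m hn hm => ?_
  · rw [← ENNReal.ofReal_tsum_of_nonneg (fun N => by positivity) hsum]
    exact ENNReal.ofReal_ne_top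
  · have hX : MemLp (F n - F m) 2 P := (hF n).sub (hF m)
    rw [eLpNorm_one_eq_lintegral_enorm,
      ← ofReal_integral_norm_eq_lintegral_enorm (hX.integrable one_le_two),
      ENNReal.ofReal_lt_ofReal_iff (by positivity)]
    have := integral_abs_le_of_integral_sq_le hX (by positivity) (hcau N n m hn hm)
    simp only [Pi.sub_apply, Real.norm_eq_abs] at this ⊢
    nlinarith [pow_pos (by norm_num : (0 : ℝ) < 2⁻¹) N]

lemma tendsto_integral_abs_sub_of_ae_tendsto [IsFiniteMeasure P] {F : ℕ → Ω → ℝ} {G : Ω → ℝ}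
    (hF : ∀ n, AEStronglyMeasurable (F n) P) (hG : AEStronglyMeasurable G P) {C : ℝ}
    (hFC : ∀ n, ∀ᵐ ω ∂P, |F n ω| ≤ C)
    (hlim : ∀ᵐ ω ∂P, Tendsto (fun n => F n ω) atTop (𝓝 (G ω))) :
    Tendsto (fun n => ∫ ω, |F n ω - G ω| ∂P) atTop (𝓝 0) := by
  have hGC : ∀ᵐ ω ∂P, |G ω| ≤ C := by
    filter_upwards [hlim, ae_all_iff.2 hFC] with ω hω hC
    exact le_of_tendsto' hω.abs hC
  simpa using tendsto_integral_of_dominated_convergence (F := fun n ω => |F n ω - G ω|)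
    (f := fun _ => 0) (fun _ => 2 * C) (fun n => ((hF n).sub hG).norm) (integrable_const _)
    (fun n => by
      filter_upwards [hFC n, hGC] with ω h1 h2
      rw [Real.norm_eq_abs, abs_abs]
      linarith [abs_sub (F n ω) (G ω)])
    (by
      filter_upwards [hlim] with ω hω
      simpa using (hω.sub_const (G ω)).abs)

lemma exists_pos_le_setIntegral [IsFiniteMeasure P] {G : Ω → ℝ} (hG : Measurable G)
    (hGi : Integrable G P) (hGpos : ∀ ω, 0 < G ω) {ε : ℝ≥0∞} (hε : ε ≠ 0) (hε' : ε ≠ ∞) :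
    ∃ κ > 0, ∀ A, MeasurableSet A → ε ≤ P A → κ ≤ ∫ ω in A, G ω ∂P := by
  have hlim : Tendsto (fun r => P {ω | G ω ≤ r}) (𝓝[>] 0) (𝓝 0) := by
    have h := tendsto_measure_biInter_gt (μ := P) (s := fun r => {ω | G ω ≤ r}) (a := (0 : ℝ))
      (fun _ _ => (measurableSet_le hG measurable_const).nullMeasurableSet)
      (fun _ _ _ hij _ hω => le_trans hω hij) ⟨1, one_pos, measure_ne_top _ _⟩
    have hempty : ⋂ r > (0 : ℝ), {ω | G ω ≤ r} = ∅ :=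
      eq_empty_of_forall_notMem fun ω hω =>
        (half_lt_self (hGpos ω)).not_ge (mem_iInter₂.1 hω (G ω / 2) (half_pos (hGpos ω)))
    rwa [hempty, measure_empty] at h
  obtain ⟨δ, hδP, hδ⟩ :=
    ((hlim.eventually (gt_mem_nhds (ENNReal.half_pos hε))).and self_mem_nhdsWithin).exists
  refine ⟨δ * (ε / 2).toReal, mul_pos hδ (ENNReal.toReal_pos (ENNReal.half_pos hε).ne'
    (ENNReal.div_ne_top hε' two_ne_zero)), fun A hA hPA => ?_⟩
  set B := {ω | δ < G ω}
  have hB : MeasurableSet B := measurableSet_lt measurable_const hG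
  have hAB : ε / 2 ≤ P (A ∩ B) := by
    by_contra! hlt
    have hcover : A ⊆ (A ∩ B) ∪ {ω | G ω ≤ δ} := fun ω hω =>
      (lt_or_ge δ (G ω)).imp (fun h => ⟨hω, h⟩) id
    have := (hPA.trans ((measure_mono hcover).trans (measure_union_le _ _))).trans_lt
      (ENNReal.add_lt_add hlt hδP)
    rw [ENNReal.add_halves] at this
    exact lt_irrefl _ this
  calc δ * (ε / 2).toReal ≤ δ * P.real (A ∩ B) :=
        mul_le_mul_of_nonneg_left (ENNReal.toReal_mono (measure_ne_top _ _) hAB) hδ.le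
    _ ≤ ∫ ω in A ∩ B, G ω ∂P := by
        have := setIntegral_ge_of_const_le (hA.inter hB) (measure_ne_top _ _)
          (fun ω hω => hω.2.le) hGi.integrableOn
        rwa [smul_eq_mul, mul_comm] at this
    _ ≤ ∫ ω in A, G ω ∂P :=
        setIntegral_mono_set hGi.integrableOn (ae_of_all _ fun ω => (hGpos ω).le)
          inter_subset_left.eventuallyLE

lemma measurable_of_mem_tailHull {f : ℕ → Ω → ℝ} (hf : ∀ n, Measurable (f n)) {n : ℕ}
    {b : Ω → ℝ} (hb : b ∈ tailHull f n) : Measurable b := by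
  refine convexHull_min (t := {g | Measurable g}) ?_ ?_ hb
  · rintro _ ⟨k, -, rfl⟩
    exact hf k
  · exact fun x hx y hy a c _ _ _ => (hx.const_smul a).add (hy.const_smul c)

lemma ae_nonneg_of_mem_tailHull {f : ℕ → Ω → ℝ} (hf : ∀ n, 0 ≤ᵐ[P] f n) {n : ℕ}
    {b : Ω → ℝ} (hb : b ∈ tailHull f n) : 0 ≤ᵐ[P] b := by
  refine convexHull_min (t := {g | 0 ≤ᵐ[P] g}) ?_ ?_ hb
  · rintro _ ⟨k, -, rfl⟩
    exact hf k
  · intro x hx y hy a c ha hc _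
    show 0 ≤ᵐ[P] a • x + c • y
    filter_upwards [hx, hy] with ω hxω hyω
    simp only [Pi.zero_apply, Pi.add_apply, Pi.smul_apply, smul_eq_mul] at hxω hyω ⊢
    positivity

/-- The head `conv {f 0, …, f N}` is dominated by the finite `∑ k ≤ N, |f k|`, so large values of
the hull on a set of definite mass must come from the tail. -/
lemma exists_mem_tailHull_le_measure [IsFiniteMeasure P] {f : ℕ → Ω → ℝ}
    (hf : ∀ n, Measurable (f n)) {ε : ℝ≥0∞} (hε : ε ≠ 0)
    (hB : ∀ ℓ : ℝ, ∃ b ∈ convexHull ℝ (range f), ε ≤ P {ω | ℓ < b ω}) (N : ℕ) (ℓ : ℝ) :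
    ∃ d ∈ tailHull f N, ε / 2 ≤ P {ω | ℓ < d ω} := by
  set M : Ω → ℝ := fun ω => ∑ k ∈ Finset.Iic N, |f k ω|
  have hM : Measurable M := Finset.measurable_sum _ fun k _ => (hf k).abs
  obtain ⟨ℓ₀, hℓ₀⟩ := ((tendsto_measure_lt_atTop (P := P) hM).eventually_lt_const
    (ENNReal.half_pos hε)).exists
  obtain ⟨b, hb, hbε⟩ := hB (max ℓ ℓ₀)
  rw [convexHull_range_eq_convexJoin f N] at hb
  obtain ⟨c, hc, d, hd, p, q, hp, hq, hpq, rfl⟩ := mem_convexJoin.1 hb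
  refine ⟨d, tailHull_antitone f N.le_succ hd, ?_⟩
  have hsub : {ω | max ℓ ℓ₀ < (p • c + q • d) ω} ⊆ {ω | ℓ₀ < M ω} ∪ {ω | ℓ < d ω} := by
    intro ω hω
    by_contra h
    simp only [mem_union, mem_ofPred_eq, not_or, not_lt, Pi.add_apply, Pi.smul_apply,
      smul_eq_mul] at h hω
    have hcω : c ω ≤ max ℓ ℓ₀ :=
      ((le_sum_abs_of_mem_convexHull_image f _ hc ω).trans h.1).trans (le_max_right _ _)
    have hdω : d ω ≤ max ℓ ℓ₀ := h.2.trans (le_max_left _ _)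
    have hmix : p * max ℓ ℓ₀ + q * max ℓ ℓ₀ = max ℓ ℓ₀ := by rw [← add_mul, hpq, one_mul]
    nlinarith [mul_le_mul_of_nonneg_left hcω hp, mul_le_mul_of_nonneg_left hdω hq]
  by_contra! hlt
  have := ((hbε.trans (measure_mono hsub)).trans (measure_union_le _ _)).trans_lt
    (ENNReal.add_lt_add hℓ₀ hlt)
  rw [ENNReal.add_halves] at this
  exact lt_irrefl _ this

noncomputable def expNegIntegral (P : Measure Ω) (b : Ω → ℝ) : ℝ := ∫ ω, exp (-b ω) ∂P

lemma memLp_exp_neg [IsFiniteMeasure P] {b : Ω → ℝ} (hb : Measurable b) (hb0 : 0 ≤ᵐ[P] b)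
    (p : ℝ≥0∞) : MemLp (fun ω => exp (-b ω)) p P :=
  MemLp.of_bound hb.neg.exp.aestronglyMeasurable 1 <| by
    filter_upwards [hb0] with ω hω
    exact (Real.norm_eq_abs _).trans_le (abs_exp_neg_le_one hω)

lemma integrable_exp_neg [IsFiniteMeasure P] {b : Ω → ℝ} (hb : Measurable b)
    (hb0 : 0 ≤ᵐ[P] b) : Integrable (fun ω => exp (-b ω)) P :=
  memLp_one_iff_integrable.1 (memLp_exp_neg hb hb0 1)

lemma expNegIntegral_nonneg (P : Measure Ω) (b : Ω → ℝ) : 0 ≤ expNegIntegral P b :=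
  integral_nonneg fun _ => (exp_pos _).le

lemma expNegIntegral_le_one [IsProbabilityMeasure P] {b : Ω → ℝ} (hb0 : 0 ≤ᵐ[P] b) :
    expNegIntegral P b ≤ 1 := by
  refine (integral_mono_of_nonneg (ae_of_all _ fun _ => (exp_pos _).le) (integrable_const 1)
    ?_).trans (by simp)
  filter_upwards [hb0] with ω hω
  exact exp_le_one_iff.2 (neg_nonpos.2 hω)

lemma integral_sq_exp_neg_sub_le [IsFiniteMeasure P] {x y : Ω → ℝ} (hx : Measurable x)
    (hx0 : 0 ≤ᵐ[P] x) (hy : Measurable y) (hy0 : 0 ≤ᵐ[P] y) :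
    ∫ ω, (exp (-x ω) - exp (-y ω)) ^ 2 ∂P ≤
      8 * ((expNegIntegral P x + expNegIntegral P y) / 2 -
        expNegIntegral P ((2⁻¹ : ℝ) • x + (2⁻¹ : ℝ) • y)) := by
  have hmid : Measurable ((2⁻¹ : ℝ) • x + (2⁻¹ : ℝ) • y) := (hx.const_smul _).add (hy.const_smul _)
  have hmid0 : 0 ≤ᵐ[P] (2⁻¹ : ℝ) • x + (2⁻¹ : ℝ) • y := by
    filter_upwards [hx0, hy0] with ω hxω hyω
    simp only [Pi.zero_apply, Pi.add_apply, Pi.smul_apply, smul_eq_mul] at hxω hyω ⊢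
    positivity
  have hix := integrable_exp_neg hx hx0
  have hiy := integrable_exp_neg hy hy0
  have hiavg : Integrable (fun ω => (exp (-x ω) + exp (-y ω)) / 2) P := (hix.add hiy).div_const 2
  have himid := integrable_exp_neg hmid hmid0
  calc ∫ ω, (exp (-x ω) - exp (-y ω)) ^ 2 ∂P
      ≤ ∫ ω, 8 * ((exp (-x ω) + exp (-y ω)) / 2 -
          exp (-((2⁻¹ : ℝ) • x + (2⁻¹ : ℝ) • y) ω)) ∂P := by
        refine integral_mono_ae
          ((memLp_exp_neg hx hx0 2).sub (memLp_exp_neg hy hy0 2)).integrable_sq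
          ((hiavg.sub himid).const_mul 8) ?_
        filter_upwards [hx0, hy0] with ω hxω hyω
        exact sq_exp_neg_sub_exp_neg_le hxω hyω
    _ = _ := by
        rw [integral_const_mul, integral_sub hiavg himid, integral_div, integral_add hix hiy]
        rfl

lemma expNegIntegral_convexComb_le [IsProbabilityMeasure P] {h b : Ω → ℝ} (hh : Measurable h)
    (hh0 : 0 ≤ᵐ[P] h) (hb : Measurable b) (hb0 : 0 ≤ᵐ[P] b) {t ℓ : ℝ} (ht0 : 0 ≤ t)
    (ht1 : t ≤ 1) (htℓ : 1 ≤ t * ℓ) :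
    expNegIntegral P ((1 - t) • h + t • b) ≤
      t + expNegIntegral P h - 2⁻¹ * ∫ ω in {ω | ℓ < b ω}, exp (-h ω) ∂P := by
  set A := {ω | ℓ < b ω}
  have hA : MeasurableSet A := measurableSet_lt measurable_const hb
  have hih := integrable_exp_neg hh hh0
  have hw : Measurable ((1 - t) • h + t • b) := (hh.const_smul _).add (hb.const_smul _)
  have hw0 : 0 ≤ᵐ[P] (1 - t) • h + t • b := by
    filter_upwards [hh0, hb0] with ω hhω hbω
    simp only [Pi.zero_apply, Pi.add_apply, Pi.smul_apply, smul_eq_mul] at hhω hbω ⊢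
    have : 0 ≤ 1 - t := by linarith
    positivity
  have hpt : ∀ᵐ ω ∂P, exp (-((1 - t) • h + t • b) ω) ≤
      t + (exp (-h ω) - 2⁻¹ * A.indicator (fun ω => exp (-h ω)) ω) := by
    filter_upwards [hb0] with ω (hbω : 0 ≤ b ω)
    have key := exp_neg_convexComb_le (h := h ω) ht0 ht1 hbω
    simp only [Pi.add_apply, Pi.smul_apply, smul_eq_mul]
    by_cases hω : ω ∈ A
    · rw [indicator_of_mem hω]
      have hcut : exp (-(t * b ω)) ≤ 2⁻¹ := by
        have : t * ℓ ≤ t * b ω := mul_le_mul_of_nonneg_left (le_of_lt hω) ht0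
        refine (exp_le_exp.2 (by linarith : -(t * b ω) ≤ -1)).trans ?_
        linarith [exp_neg_one_lt_half]
      nlinarith [exp_pos (-h ω)]
    · rw [indicator_of_notMem hω]
      have hcut : exp (-(t * b ω)) ≤ 1 := exp_le_one_iff.2 (by nlinarith)
      nlinarith [exp_pos (-h ω)]
  have hicut : Integrable (fun ω => 2⁻¹ * A.indicator (fun ω => exp (-h ω)) ω) P :=
    (hih.indicator hA).const_mul 2⁻¹
  have hirhs : Integrable (fun ω => exp (-h ω) - 2⁻¹ * A.indicator (fun ω => exp (-h ω)) ω) P :=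
    hih.sub hicut
  calc expNegIntegral P ((1 - t) • h + t • b)
      ≤ ∫ ω, t + (exp (-h ω) - 2⁻¹ * A.indicator (fun ω => exp (-h ω)) ω) ∂P :=
        integral_mono_ae (integrable_exp_neg hw hw0) ((integrable_const t).add hirhs) hpt
    _ = _ := by
        rw [integral_add (integrable_const t) hirhs, integral_sub hih hicut, integral_const_mul,
          integral_indicator hA]
        simp only [integral_const, probReal_univ, smul_eq_mul, one_mul, expNegIntegral]
        ring

lemma exists_pos_tendsto_integral_abs_exp_neg_sub [IsFiniteMeasure P] {H : ℕ → Ω → ℝ}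
    (hH : ∀ n, Measurable (H n)) (hH0 : ∀ n, 0 ≤ᵐ[P] H n)
    (hconv : ∀ᵐ ω ∂P, ∃ L, Tendsto (fun n => exp (-H n ω)) atTop (𝓝 L))
    (hfin : ∀ g : Ω → ℝ≥0∞, Measurable g →
      (∀ᵐ ω ∂P, Tendsto (fun n => ENNReal.ofReal (H n ω)) atTop (𝓝 (g ω))) → ∀ᵐ ω ∂P, g ω < ∞) :
    ∃ G : Ω → ℝ, Measurable G ∧ Integrable G P ∧ (∀ ω, 0 < G ω) ∧
      Tendsto (fun n => ∫ ω, |exp (-H n ω) - G ω| ∂P) atTop (𝓝 0) := by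
  set g : Ω → ℝ≥0∞ := fun ω => limsup (fun n => ENNReal.ofReal (H n ω)) atTop
  have hg : Measurable g := Measurable.limsup fun n => ENNReal.measurable_ofReal.comp (hH n)
  have hlim : ∀ᵐ ω ∂P, Tendsto (fun n => ENNReal.ofReal (H n ω)) atTop (𝓝 (g ω)) := by
    filter_upwards [hconv] with ω ⟨L, hL⟩
    obtain ⟨l, hl⟩ := exists_tendsto_ofReal_of_tendsto_exp_neg hL
    convert hl using 2
    exact hl.limsup_eq
  set G : Ω → ℝ := fun ω => exp (-(g ω).toReal)
  have hG : Measurable G := hg.ennreal_toReal.neg.exp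
  have hG1 : ∀ ω, |G ω| ≤ 1 := fun ω => abs_exp_neg_le_one ENNReal.toReal_nonneg
  refine ⟨G, hG, (integrable_const 1).mono' hG.aestronglyMeasurable
    (ae_of_all _ fun ω => (Real.norm_eq_abs _).trans_le (hG1 ω)), fun ω => exp_pos _,
    tendsto_integral_abs_sub_of_ae_tendsto (fun n => (hH n).neg.exp.aestronglyMeasurable)
      hG.aestronglyMeasurable (C := 1) (fun n => ?_) ?_⟩
  · filter_upwards [hH0 n] with ω hω
    exact abs_exp_neg_le_one hω
  · filter_upwards [hlim, hfin g hg hlim, ae_all_iff.2 hH0] with ω hω hgω hH0ω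
    exact tendsto_exp_neg_of_tendsto_ofReal hH0ω hgω.ne hω

end Measure

section ApproxMinimizing

variable {Ω : Type*} [MeasurableSpace Ω] {P : Measure Ω} {f : ℕ → Ω → ℝ} {s : ℝ}
  {ε : ℕ → ℝ} {φ : ℕ → ℕ} {H : ℕ → Ω → ℝ}

lemma integral_sq_exp_neg_sub_le_of_isApproxMinimizing [IsFiniteMeasure P]
    (hf : ∀ n, Measurable (f n)) (hf0 : ∀ n, 0 ≤ᵐ[P] f n) (hε : Antitone ε) (hφ : Monotone φ)
    (hH : IsApproxMinimizing (tailHull f) (expNegIntegral P) s ε φ H) {N n m : ℕ} (hn : N ≤ n)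
    (hm : N ≤ m) : ∫ ω, (exp (-H n ω) - exp (-H m ω)) ^ 2 ∂P ≤ 16 * ε N := by
  have hHn := tailHull_antitone f (hφ hn) (hH n).1
  have hHm := tailHull_antitone f (hφ hm) (hH m).1
  have hmid : (2⁻¹ : ℝ) • H n + (2⁻¹ : ℝ) • H m ∈ tailHull f (φ N) :=
    convex_tailHull f _ hHn hHm (by norm_num) (by norm_num) (by norm_num)
  have := integral_sq_exp_neg_sub_le (measurable_of_mem_tailHull hf hHn)
    (ae_nonneg_of_mem_tailHull hf0 hHn) (measurable_of_mem_tailHull hf hHm)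
    (ae_nonneg_of_mem_tailHull hf0 hHm)
  linarith [(hH N).2.2 _ hmid, (hH n).2.1, (hH m).2.1, hε hn, hε hm]

lemma ae_exists_tendsto_exp_neg_of_isApproxMinimizing [IsProbabilityMeasure P]
    (hf : ∀ n, Measurable (f n)) (hf0 : ∀ n, 0 ≤ᵐ[P] f n) (hφ : Monotone φ)
    (hH : IsApproxMinimizing (tailHull f) (expNegIntegral P) s (fun n => 4⁻¹ ^ n) φ H) :
    ∀ᵐ ω ∂P, ∃ L, Tendsto (fun n => exp (-H n ω)) atTop (𝓝 L) := by
  have hHm n := measurable_of_mem_tailHull hf (hH n).1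
  have hH0 n := ae_nonneg_of_mem_tailHull hf0 (hH n).1
  refine ae_exists_tendsto_of_integral_sq_sub_le_s13 (fun n => memLp_exp_neg (hHm n) (hH0 n) 2)
    (c := 4) (by norm_num) fun N n m hn hm => ?_
  have hε : Antitone fun n : ℕ => (4⁻¹ : ℝ) ^ n := fun _ _ h =>
    pow_le_pow_of_le_one (by norm_num) (by norm_num) h
  refine (integral_sq_exp_neg_sub_le_of_isApproxMinimizing hf hf0 hε hφ hH hn hm).trans_eq ?_
  rw [mul_pow, ← pow_mul, mul_comm N, pow_mul]
  norm_num

/-- Mixing into the near-minimizer `H j` a small multiple of a tail element that is large on a set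
of definite mass would push `expNegIntegral` below its infimum over the tail. -/
lemma exists_forall_measure_lt_of_isApproxMinimizing [IsProbabilityMeasure P]
    (hf : ∀ n, Measurable (f n)) (hf0 : ∀ n, 0 ≤ᵐ[P] f n) (hε : Tendsto ε atTop (𝓝 0))
    (hH : IsApproxMinimizing (tailHull f) (expNegIntegral P) s ε φ H) {G : Ω → ℝ}
    (hG : Measurable G) (hGi : Integrable G P) (hGpos : ∀ ω, 0 < G ω)
    (hL1 : Tendsto (fun n => ∫ ω, |exp (-H n ω) - G ω| ∂P) atTop (𝓝 0)) {η : ℝ≥0∞}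
    (hη : η ≠ 0) (hη' : η ≠ ∞) :
    ∃ N ℓ, ∀ d ∈ tailHull f N, P {ω | ℓ < d ω} < η := by
  obtain ⟨κ, hκ, hGA⟩ := exists_pos_le_setIntegral hG hGi hGpos hη hη'
  set t := min 1 (κ / 16)
  have ht0 : 0 < t := lt_min one_pos (by positivity)
  obtain ⟨j, hjε, hjL1⟩ := ((hε.eventually (gt_mem_nhds (by positivity : 0 < κ / 16))).and
    (hL1.eventually (gt_mem_nhds (by positivity : 0 < κ / 2)))).exists
  refine ⟨φ j, 1 / t, fun d hd => lt_of_not_ge fun hdη => ?_⟩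
  obtain ⟨hHj, hHjV, hmin⟩ := hH j
  have hHjm := measurable_of_mem_tailHull hf hHj
  have hHj0 := ae_nonneg_of_mem_tailHull hf0 hHj
  have hd0 := ae_nonneg_of_mem_tailHull hf0 hd
  have hdm := measurable_of_mem_tailHull hf hd
  set A := {ω | 1 / t < d ω}
  have hA : MeasurableSet A := measurableSet_lt measurable_const hdm
  have hF := integrable_exp_neg hHjm hHj0
  have hFA : ∫ ω in A, G ω ∂P - ∫ ω in A, exp (-H j ω) ∂P ≤ ∫ ω, |exp (-H j ω) - G ω| ∂P :=
    calc ∫ ω in A, G ω ∂P - ∫ ω in A, exp (-H j ω) ∂P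
        = ∫ ω in A, (G ω - exp (-H j ω)) ∂P := (integral_sub hGi.integrableOn hF.integrableOn).symm
      _ ≤ ∫ ω in A, |exp (-H j ω) - G ω| ∂P :=
          integral_mono (hGi.integrableOn.sub hF.integrableOn) (hF.sub hGi).abs.integrableOn
            fun ω => abs_sub_comm (G ω) _ ▸ le_abs_self _
      _ ≤ ∫ ω, |exp (-H j ω) - G ω| ∂P :=
          setIntegral_le_integral (hF.sub hGi).abs (ae_of_all _ fun _ => abs_nonneg _)
  have hw := hmin ((1 - t) • H j + t • d) (convex_tailHull f _ hHj hd
    (by linarith [min_le_left 1 (κ / 16)]) ht0.le (by ring))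
  have hdesc := expNegIntegral_convexComb_le hHjm hHj0 hdm hd0 ht0.le (min_le_left _ _)
    (ℓ := 1 / t) (by rw [mul_one_div_cancel ht0.ne'])
  linarith [min_le_right 1 (κ / 16), hGA A hA hdη]

end ApproxMinimizing

theorem stmt13 {Ω : Type*} [MeasurableSpace Ω] (P : Measure Ω)
    [IsProbabilityMeasure P]
    (f : ℕ → Ω → ℝ)
    (hfmeas : ∀ n, Measurable (f n)) (hfnn : ∀ n, 0 ≤ᵐ[P] f n)
    (hfin : ∀ (h : ℕ → Ω → ℝ) (g : Ω → ENNReal), FwdConvexCombos f h → Measurable g →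
      (∀ᵐ ω ∂P, Tendsto (fun n => ENNReal.ofReal (h n ω)) atTop (nhds (g ω))) →
      ∀ᵐ ω ∂P, g ω < ⊤) :
    BddInProbability P (convexHull ℝ (Set.range f)) := by
  by_contra hB
  obtain ⟨η, hη, hη', hbig⟩ := exists_le_measure_of_not_bddInProbability hB
  obtain ⟨s, φ, H, hφ, hH⟩ := exists_isApproxMinimizing (tailHull_antitone f)
    (fun n => ⟨f n, self_mem_tailHull f n⟩) (V := expNegIntegral P)
    ⟨0, by rintro _ ⟨b, -, rfl⟩; exact expNegIntegral_nonneg P b⟩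
    ⟨1, by rintro _ ⟨b, hb, rfl⟩; exact expNegIntegral_le_one (ae_nonneg_of_mem_tailHull hfnn hb)⟩
    (ε := fun n => 4⁻¹ ^ n) (fun n => by positivity)
  have hHm n := measurable_of_mem_tailHull hfmeas (hH n).1
  have hH0 n := ae_nonneg_of_mem_tailHull hfnn (hH n).1
  obtain ⟨G, hG, hGi, hGpos, hL1⟩ := exists_pos_tendsto_integral_abs_exp_neg_sub hHm hH0
    (ae_exists_tendsto_exp_neg_of_isApproxMinimizing hfmeas hfnn hφ.monotone hH)
    (hfin H · fun n => tailHull_antitone f (hφ.id_le n) (hH n).1)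
  obtain ⟨N, ℓ, hN⟩ := exists_forall_measure_lt_of_isApproxMinimizing hfmeas hfnn
    (tendsto_pow_atTop_nhds_zero_of_lt_one (by norm_num) (by norm_num)) hH hG hGi hGpos hL1
    (ENNReal.half_pos hη).ne' (ENNReal.div_ne_top hη' two_ne_zero)
  obtain ⟨d, hd, hdP⟩ := exists_mem_tailHull_le_measure hfmeas hη hbig N ℓ
  exact (hN d hd).not_ge hdP
end
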